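/- arXiv:0806.2903 — 4 statements merged into one kernel-verified Lean document; each statement's English description precedes it below -/
import Mathlib

section
/- A weak bialgebra H is a bialgebra if and only if Δ∘η = η⊗η, if and only if ε∘μ = ε⊗ε, if and only if ε_s = η∘ε, and if and only if ε_t = η∘ε. -/
open TensorProduct LinearMap

namespace WeakBialgebraPaper

variable (k H : Type*) [CommRing k] [Ring H] [Algebra k H] [Coalgebra k H]

/-- `x ⊗ y ↦ ε (x * y)`. -/
noncomputable def counitMul : H ⊗[k] H →ₗ[k] k :=
  Coalgebra.counit ∘ₗ LinearMap.mul' k H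

/-- ε∘μ∘(μ⊗id) : (H⊗H)⊗H → k -/
noncomputable def weakCounitLHS : (H ⊗[k] H) ⊗[k] H →ₗ[k] k :=
  Coalgebra.counit ∘ₗ LinearMap.mul' k H ∘ₗ LinearMap.rTensor H (LinearMap.mul' k H)

/-- (ε⊗ε)∘(μ⊗μ)∘(id⊗Δ⊗id), with `Δ' = d` inserted in the middle slot. -/
noncomputable def weakCounitRHS (d : H →ₗ[k] H ⊗[k] H) : (H ⊗[k] H) ⊗[k] H →ₗ[k] k :=
  (TensorProduct.lid k k).toLinearMap
    ∘ₗ TensorProduct.map (counitMul k H) (counitMul k H)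
    ∘ₗ (TensorProduct.assoc k (H ⊗[k] H) H H).toLinearMap
    ∘ₗ LinearMap.rTensor H (TensorProduct.assoc k H H H).symm.toLinearMap
    ∘ₗ LinearMap.rTensor H (LinearMap.lTensor H d)

/-- (id⊗μ'⊗id)∘(Δ⊗Δ) applied to 1⊗1, with multiplication `m` in the middle. -/
noncomputable def weakUnitRHS (m : H ⊗[k] H →ₗ[k] H) : (H ⊗[k] H) ⊗[k] H :=
  (LinearMap.rTensor H (LinearMap.lTensor H m))
    ((LinearMap.rTensor H (TensorProduct.assoc k H H H).toLinearMap)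
      ((TensorProduct.assoc k (H ⊗[k] H) H H).symm
        (Coalgebra.comul (R := k) (1 : H) ⊗ₜ[k] Coalgebra.comul (R := k) (1 : H))))

/-- A weak bialgebra in the sense of Böhm–Nill–Szlachányi. -/
class WeakBialgebra : Prop where
  comul_mul : ∀ x y : H, Coalgebra.comul (R := k) (x * y) = Coalgebra.comul x * Coalgebra.comul y
  weak_counit :
    weakCounitLHS k H = weakCounitRHS k H Coalgebra.comul
  weak_counit_op :
    weakCounitLHS k H =
      weakCounitRHS k H ((TensorProduct.comm k H H).toLinearMap ∘ₗ Coalgebra.comul)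
  weak_unit :
    LinearMap.rTensor H (Coalgebra.comul (R := k)) (Coalgebra.comul (R := k) (1 : H)) =
      weakUnitRHS k H (LinearMap.mul' k H)
  weak_unit_op :
    LinearMap.rTensor H (Coalgebra.comul (R := k)) (Coalgebra.comul (R := k) (1 : H)) =
      weakUnitRHS k H (LinearMap.mul' k H ∘ₗ (TensorProduct.comm k H H).toLinearMap)

/-- The target counital map `ε_t(x) = ε(1' x) 1''`. -/
noncomputable def εt : H →ₗ[k] H :=
  (TensorProduct.rid k H).toLinearMap
    ∘ₗ LinearMap.lTensor H (counitMul k H)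
    ∘ₗ (TensorProduct.assoc k H H H).toLinearMap
    ∘ₗ LinearMap.rTensor H (TensorProduct.comm k H H).toLinearMap
    ∘ₗ TensorProduct.mk k (H ⊗[k] H) H (Coalgebra.comul (R := k) (1 : H))

/-- The source counital map `ε_s(x) = 1' ε(x 1'')`. -/
noncomputable def εs : H →ₗ[k] H :=
  (TensorProduct.rid k H).toLinearMap
    ∘ₗ LinearMap.lTensor H (counitMul k H ∘ₗ (TensorProduct.comm k H H).toLinearMap)
    ∘ₗ (TensorProduct.assoc k H H H).toLinearMap
    ∘ₗ TensorProduct.mk k (H ⊗[k] H) H (Coalgebra.comul (R := k) (1 : H))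

end WeakBialgebraPaper

section Aux

set_option maxHeartbeats 1000000
set_option synthInstance.maxHeartbeats 400000

namespace WeakBialgebraPaper

variable {k H : Type*} [CommRing k] [Ring H] [Algebra k H] [Coalgebra k H]

lemma counitMul_tmul (x y : H) :
    counitMul k H (x ⊗ₜ[k] y) = Coalgebra.counit (R := k) (x * y) := by
  simp [counitMul]

lemma εt_apply {ι : Type*} (r : Coalgebra.Repr k (1 : H) ι) (x : H) :
    εt k H x = ∑ i ∈ r.index, Coalgebra.counit (R := k) (r.left i * x) • r.right i := by
  rw [εt]
  simp only [comp_apply, LinearEquiv.coe_coe, TensorProduct.mk_apply]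
  rw [← r.eq]
  simp [TensorProduct.sum_tmul, counitMul_tmul]

lemma εs_apply {ι : Type*} (r : Coalgebra.Repr k (1 : H) ι) (x : H) :
    εs k H x = ∑ i ∈ r.index, Coalgebra.counit (R := k) (x * r.right i) • r.left i := by
  rw [εs]
  simp only [comp_apply, LinearEquiv.coe_coe, TensorProduct.mk_apply]
  rw [← r.eq]
  simp [TensorProduct.sum_tmul, counitMul_tmul]

lemma weakUnitRHS_eq {ι : Type*} (r : Coalgebra.Repr k (1 : H) ι) (m : H ⊗[k] H →ₗ[k] H) :
    weakUnitRHS k H m = ∑ i ∈ r.index, ∑ j ∈ r.index,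
      (r.left i ⊗ₜ[k] m (r.right i ⊗ₜ[k] r.left j)) ⊗ₜ[k] r.right j := by
  rw [weakUnitRHS, ← r.eq]
  simp only [TensorProduct.sum_tmul, TensorProduct.tmul_sum, map_sum,
    TensorProduct.assoc_symm_tmul, TensorProduct.assoc_tmul, LinearMap.rTensor_tmul,
    LinearMap.lTensor_tmul, LinearEquiv.coe_coe]
  rw [Finset.sum_comm]

/-- Key consequence of the weak unit axiom: `Δ(1) = 1₍₁₎ ⊗ ε_t(1₍₂₎)`. -/
lemma comul_one_eq_tmul_εt [WeakBialgebra k H] {ι : Type*} (r : Coalgebra.Repr k (1 : H) ι) :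
    Coalgebra.comul (R := k) (1 : H) = ∑ i ∈ r.index, r.left i ⊗ₜ[k] εt k H (r.right i) := by
  set f : H ⊗[k] H →ₗ[k] H :=
    (TensorProduct.lid k H).toLinearMap ∘ₗ rTensor H (Coalgebra.counit (R := k)) with hf
  set LB : (H ⊗[k] H) ⊗[k] H →ₗ[k] H ⊗[k] H :=
    LinearMap.lTensor H f ∘ₗ (TensorProduct.assoc k H H H).toLinearMap with hLB
  have hfc : f ∘ₗ (Coalgebra.comul (R := k) (A := H)) = LinearMap.id := by
    rw [hf, LinearMap.comp_assoc, Coalgebra.rTensor_counit_comp_comul]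
    ext x
    simp
  calc Coalgebra.comul (R := k) (1 : H)
      = LB (LinearMap.rTensor H (Coalgebra.comul (R := k))
          (Coalgebra.comul (R := k) (1 : H))) := by
        rw [hLB, comp_apply, LinearEquiv.coe_coe, Coalgebra.coassoc_apply,
          ← LinearMap.lTensor_comp_apply, hfc, LinearMap.lTensor_id, LinearMap.id_apply]
    _ = LB (weakUnitRHS k H (LinearMap.mul' k H ∘ₗ (TensorProduct.comm k H H).toLinearMap)) := by
        rw [WeakBialgebra.weak_unit_op]
    _ = ∑ i ∈ r.index, r.left i ⊗ₜ[k] εt k H (r.right i) := by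
        rw [weakUnitRHS_eq r]
        simp only [map_sum, hLB, comp_apply, LinearEquiv.coe_coe, TensorProduct.assoc_tmul,
          LinearMap.lTensor_tmul, hf, LinearMap.rTensor_tmul, TensorProduct.comm_tmul,
          LinearMap.mul'_apply, TensorProduct.lid_tmul]
        refine Finset.sum_congr rfl fun i _ => ?_
        rw [εt_apply r, TensorProduct.tmul_sum]

/-- Key consequence of the weak unit axiom: `Δ(1) = ε_s(1₍₁₎) ⊗ 1₍₂₎`. -/
lemma comul_one_eq_εs_tmul [WeakBialgebra k H] {ι : Type*} (r : Coalgebra.Repr k (1 : H) ι) :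
    Coalgebra.comul (R := k) (1 : H) = ∑ j ∈ r.index, εs k H (r.left j) ⊗ₜ[k] r.right j := by
  set g : H ⊗[k] H →ₗ[k] H :=
    (TensorProduct.rid k H).toLinearMap ∘ₗ lTensor H (Coalgebra.counit (R := k)) with hg
  set LA : (H ⊗[k] H) ⊗[k] H →ₗ[k] H ⊗[k] H := LinearMap.rTensor H g with hLA
  have hgc : g ∘ₗ (Coalgebra.comul (R := k) (A := H)) = LinearMap.id := by
    rw [hg, LinearMap.comp_assoc, Coalgebra.lTensor_counit_comp_comul]
    ext x
    simp
  calc Coalgebra.comul (R := k) (1 : H)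
      = LA (LinearMap.rTensor H (Coalgebra.comul (R := k))
          (Coalgebra.comul (R := k) (1 : H))) := by
        rw [hLA, ← LinearMap.rTensor_comp_apply, hgc, LinearMap.rTensor_id, LinearMap.id_apply]
    _ = LA (weakUnitRHS k H (LinearMap.mul' k H ∘ₗ (TensorProduct.comm k H H).toLinearMap)) := by
        rw [WeakBialgebra.weak_unit_op]
    _ = ∑ j ∈ r.index, εs k H (r.left j) ⊗ₜ[k] r.right j := by
        rw [weakUnitRHS_eq r]
        simp only [map_sum, hLA, LinearMap.rTensor_tmul, hg, comp_apply, LinearEquiv.coe_coe,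
          LinearMap.lTensor_tmul, TensorProduct.comm_tmul, LinearMap.mul'_apply,
          TensorProduct.rid_tmul]
        rw [Finset.sum_comm]
        refine Finset.sum_congr rfl fun j _ => ?_
        rw [εs_apply r, TensorProduct.sum_tmul]

/-- The trivial representation of `Δ(1)` when `Δ(1) = 1 ⊗ 1`. -/
def reprOfComulOne (h2 : Coalgebra.comul (R := k) (1 : H) = (1 : H) ⊗ₜ[k] (1 : H)) :
    Coalgebra.Repr k (1 : H) (Fin 1) where
  index := ({0} : Finset (Fin 1))
  left := fun _ => 1
  right := fun _ => 1
  eq := by simpa using h2.symm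

lemma sum_counit_smul_right {ι : Type*} (r : Coalgebra.Repr k (1 : H) ι) :
    ∑ i ∈ r.index, Coalgebra.counit (R := k) (r.left i) • r.right i = 1 := by
  have h := congrArg (TensorProduct.lid k H) (Coalgebra.sum_counit_tmul_eq r)
  simp only [map_sum, TensorProduct.lid_tmul, one_smul] at h
  exact h

lemma sum_counit_smul_left {ι : Type*} (r : Coalgebra.Repr k (1 : H) ι) :
    ∑ i ∈ r.index, Coalgebra.counit (R := k) (r.right i) • r.left i = 1 := by
  have h := congrArg (TensorProduct.rid k H) (Coalgebra.sum_tmul_counit_eq r)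
  simp only [map_sum, TensorProduct.rid_tmul, one_smul] at h
  exact h

end WeakBialgebraPaper

end Aux

set_option maxHeartbeats 1000000
set_option synthInstance.maxHeartbeats 400000

open WeakBialgebraPaper in
/-- A weak bialgebra is a bialgebra iff `Δ∘η = η⊗η`, iff `ε∘μ = ε⊗ε`,
iff `ε_s = η∘ε`, iff `ε_t = η∘ε`. -/
theorem weakBialgebra_is_bialgebra_tfae (k H : Type*) [Field k] [Ring H] [Algebra k H]
    [Coalgebra k H] [WeakBialgebra k H] :
    List.TFAE
      [ -- `H` is a bialgebra: both `Δ` and `ε` are multiplicative and unital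
        (Coalgebra.comul (R := k) (1 : H) = (1 : H) ⊗ₜ[k] (1 : H) ∧
          ∀ x y : H, Coalgebra.counit (R := k) (x * y) =
            Coalgebra.counit (R := k) x * Coalgebra.counit (R := k) y),
        -- `Δ ∘ η = η ⊗ η`
        Coalgebra.comul (R := k) (1 : H) = (1 : H) ⊗ₜ[k] (1 : H),
        -- `ε ∘ μ = ε ⊗ ε`
        (∀ x y : H, Coalgebra.counit (R := k) (x * y) =
          Coalgebra.counit (R := k) x * Coalgebra.counit (R := k) y),
        -- `ε_s = η ∘ ε`
        εs k H = Algebra.linearMap k H ∘ₗ Coalgebra.counit,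
        -- `ε_t = η ∘ ε`
        εt k H = Algebra.linearMap k H ∘ₗ Coalgebra.counit ] := by
  tfae_have 1 → 2 := fun h => h.1
  tfae_have 2 → 3 := by
    intro h2 x y
    have h := LinearMap.congr_fun (WeakBialgebra.weak_counit (k := k) (H := H))
      ((x ⊗ₜ[k] (1 : H)) ⊗ₜ[k] y)
    simpa [weakCounitLHS, weakCounitRHS, counitMul_tmul, h2] using h
  tfae_have 3 → 5 := by
    intro h3
    ext x
    set r := Coalgebra.Repr.arbitrary k (1 : H)
    rw [εt_apply r]
    have step : ∀ i ∈ r.index, Coalgebra.counit (R := k) (r.left i * x) • r.right i =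
        Coalgebra.counit (R := k) x • (Coalgebra.counit (R := k) (r.left i) • r.right i) := by
      intro i _
      rw [h3, mul_comm, mul_smul]
    rw [Finset.sum_congr rfl step, ← Finset.smul_sum, sum_counit_smul_right r]
    simp [Algebra.algebraMap_eq_smul_one]
  tfae_have 5 → 2 := by
    intro h5
    set r := Coalgebra.Repr.arbitrary k (1 : H)
    rw [comul_one_eq_tmul_εt r, h5]
    simp only [LinearMap.comp_apply, Algebra.linearMap_apply, Algebra.algebraMap_eq_smul_one,
      TensorProduct.tmul_smul, TensorProduct.smul_tmul']
    rw [← TensorProduct.sum_tmul, sum_counit_smul_left r]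
  tfae_have 2 → 4 := by
    intro h2
    ext x
    rw [εs_apply (reprOfComulOne h2)]
    simp [reprOfComulOne, Algebra.algebraMap_eq_smul_one]
  tfae_have 4 → 2 := by
    intro h4
    set r := Coalgebra.Repr.arbitrary k (1 : H)
    rw [comul_one_eq_εs_tmul r, h4]
    simp only [LinearMap.comp_apply, Algebra.linearMap_apply, Algebra.algebraMap_eq_smul_one,
      TensorProduct.smul_tmul]
    rw [← TensorProduct.tmul_sum, sum_counit_smul_right r]
  tfae_have 2 → 1 := fun h2 => ⟨h2, tfae_2_to_3 h2⟩
  tfae_finish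
end

section
/- In a weak Hopf algebra H, the antipode S is an algebra antihomomorphism (S(xy) = S(y)S(x) and S(1) = 1) and a coalgebra antihomomorphism (Δ(S(x)) = S(x'') ⊗ S(x') and ε∘S = ε). -/
open TensorProduct LinearMap

namespace WeakBialgebraPaper

variable (k H : Type*) [CommRing k] [Ring H] [Algebra k H] [Coalgebra k H]

/-- `S` is an antipode for the weak bialgebra `H`:
`x' S(x'') = ε_t(x)`, `S(x') x'' = ε_s(x)` and `S(x') x'' S(x''') = S(x)`. -/
noncomputable def IsAntipode (S : H →ₗ[k] H) : Prop :=
  (LinearMap.mul' k H ∘ₗ LinearMap.lTensor H S ∘ₗ Coalgebra.comul = εt k H) ∧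
  (LinearMap.mul' k H ∘ₗ LinearMap.rTensor H S ∘ₗ Coalgebra.comul = εs k H) ∧
  (LinearMap.mul' k H ∘ₗ LinearMap.rTensor H (LinearMap.mul' k H)
      ∘ₗ TensorProduct.map (LinearMap.rTensor H S) S
      ∘ₗ LinearMap.rTensor H (Coalgebra.comul (R := k))
      ∘ₗ Coalgebra.comul = S)

end WeakBialgebraPaper


namespace WeakBialgebraPaper
open Coalgebra
set_option synthInstance.maxHeartbeats 1000000
set_option maxHeartbeats 3200000
set_option linter.unusedSectionVars false
set_option autoImplicit true

section Lemmas

variable {k H : Type*} [CommRing k] [Ring H] [Algebra k H] [Coalgebra k H]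
  [WeakBialgebra k H]

local notation "ε" => Coalgebra.counit (R := k)
local notation "Δ" => Coalgebra.comul (R := k)

/-- T1 : pointwise formula for εt. -/
theorem εt_eq (x : H) (e : Coalgebra.Repr k (1 : H) ιr1) :
    εt k H x = ∑ i ∈ e.index, ε (e.left i * x) • e.right i := by
  rw [εt, ← e.eq]
  simp [counitMul, map_sum, sum_tmul, mul_comm]

/-- T2 : pointwise formula for εs. -/
theorem εs_eq (x : H) (e : Coalgebra.Repr k (1 : H) ιr2) :
    εs k H x = ∑ i ∈ e.index, ε (x * e.right i) • e.left i := by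
  rw [εs, ← e.eq]
  simp [counitMul, map_sum, sum_tmul, mul_comm]

/-- T7 : counit-left. -/
theorem sum_counit_smul (x : H) (r : Coalgebra.Repr k x ιr3) :
    ∑ i ∈ r.index, ε (r.left i) • r.right i = x := by
  have h := congrArg (TensorProduct.lid k H) (Coalgebra.sum_counit_tmul_eq (R:=k) r)
  simpa [map_sum, -Coalgebra.sum_counit_tmul_eq] using h

/-- T8 : counit-right. -/
theorem sum_smul_counit (x : H) (r : Coalgebra.Repr k x ιr4) :
    ∑ i ∈ r.index, ε (r.right i) • r.left i = x := by
  have h := congrArg (TensorProduct.rid k H) (Coalgebra.sum_tmul_counit_eq (R:=k) r)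
  simpa [map_sum, -Coalgebra.sum_tmul_counit_eq] using h


/-- A2a pointwise. -/
theorem counit_mul3 (x z : H) {y : H} (r : Coalgebra.Repr k y ιr5) :
    ε (x * y * z) = ∑ i ∈ r.index, ε (x * r.left i) * ε (r.right i * z) := by
  have h := congrFun (congrArg DFunLike.coe (WeakBialgebra.weak_counit (k := k) (H := H)))
      ((x ⊗ₜ[k] y) ⊗ₜ[k] z)
  rw [weakCounitLHS, weakCounitRHS] at h
  simp only [comp_apply, rTensor_tmul, lTensor_tmul, mul'_apply, coe_comp, LinearEquiv.coe_coe] at h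
  rw [← r.eq] at h
  simp only [tmul_sum, sum_tmul, map_sum, assoc_symm_tmul, rTensor_tmul, assoc_tmul,
    map_tmul, lid_tmul, counitMul, comp_apply, mul'_apply, smul_eq_mul] at h
  exact h

/-- A2b pointwise. -/
theorem counit_mul3' (x z : H) {y : H} (r : Coalgebra.Repr k y ιr6) :
    ε (x * y * z) = ∑ i ∈ r.index, ε (x * r.right i) * ε (r.left i * z) := by
  have h := congrFun (congrArg DFunLike.coe (WeakBialgebra.weak_counit_op (k := k) (H := H)))
      ((x ⊗ₜ[k] y) ⊗ₜ[k] z)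
  rw [weakCounitLHS, weakCounitRHS] at h
  simp only [comp_apply, rTensor_tmul, lTensor_tmul, mul'_apply, coe_comp, LinearEquiv.coe_coe] at h
  rw [← r.eq] at h
  simp only [tmul_sum, sum_tmul, map_sum, comm_tmul, assoc_symm_tmul, rTensor_tmul, assoc_tmul,
    map_tmul, lid_tmul, counitMul, comp_apply, mul'_apply, smul_eq_mul] at h
  exact h

/-- A3a pointwise, in `H ⊗ (H ⊗ H)`. -/
theorem weak_unit_sum (e e' : Coalgebra.Repr k (1 : H) ιr7) (a : ∀ i, Coalgebra.Repr k (e.left i) ιr8) :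
    ∑ i ∈ e.index, ∑ j ∈ (a i).index,
        (a i).left j ⊗ₜ[k] ((a i).right j ⊗ₜ[k] e.right i) =
      ∑ i ∈ e.index, ∑ j ∈ e'.index,
        e.left i ⊗ₜ[k] ((e.right i * e'.left j) ⊗ₜ[k] e'.right j) := by
  have h := congrArg (TensorProduct.assoc k H H H) (WeakBialgebra.weak_unit (k := k) (H := H))
  rw [weakUnitRHS] at h
  nth_rewrite 1 [← e.eq] at h
  nth_rewrite 1 [← e.eq] at h
  rw [← e'.eq] at h
  simp only [map_sum, sum_tmul, tmul_sum, rTensor_tmul, assoc_symm_tmul, assoc_tmul,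
    lTensor_tmul, mul'_apply, LinearEquiv.coe_coe, coe_comp, comp_apply,
    LinearEquiv.coe_toLinearMap] at h
  have hL : ∀ i, (TensorProduct.assoc k H H H) ((Coalgebra.comul (e.left i)) ⊗ₜ[k] e.right i)
      = ∑ j ∈ (a i).index, (a i).left j ⊗ₜ[k] ((a i).right j ⊗ₜ[k] e.right i) := fun i => by
    rw [← (a i).eq]; simp [sum_tmul, map_sum]
  simp only [hL] at h
  rw [Finset.sum_comm (s := e'.index)] at h
  exact h

/-- A3b pointwise, in `H ⊗ (H ⊗ H)`. -/
theorem weak_unit_sum' (e e' : Coalgebra.Repr k (1 : H) ιr9) (a : ∀ i, Coalgebra.Repr k (e.left i) ιr10) :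
    ∑ i ∈ e.index, ∑ j ∈ (a i).index,
        (a i).left j ⊗ₜ[k] ((a i).right j ⊗ₜ[k] e.right i) =
      ∑ i ∈ e.index, ∑ j ∈ e'.index,
        e.left i ⊗ₜ[k] ((e'.left j * e.right i) ⊗ₜ[k] e'.right j) := by
  have h := congrArg (TensorProduct.assoc k H H H) (WeakBialgebra.weak_unit_op (k := k) (H := H))
  rw [weakUnitRHS] at h
  nth_rewrite 1 [← e.eq] at h
  nth_rewrite 1 [← e.eq] at h
  rw [← e'.eq] at h
  simp only [map_sum, sum_tmul, tmul_sum, rTensor_tmul, assoc_symm_tmul, assoc_tmul,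
    lTensor_tmul, mul'_apply, comp_apply, coe_comp, LinearEquiv.coe_coe, comm_tmul,
    LinearEquiv.coe_toLinearMap] at h
  have hL : ∀ i, (TensorProduct.assoc k H H H) ((Coalgebra.comul (e.left i)) ⊗ₜ[k] e.right i)
      = ∑ j ∈ (a i).index, (a i).left j ⊗ₜ[k] ((a i).right j ⊗ₜ[k] e.right i) := fun i => by
    rw [← (a i).eq]; simp [sum_tmul, map_sum]
  simp only [hL] at h
  rw [Finset.sum_comm (s := e'.index)] at h
  exact h

/-- comul of a product, pointwise. -/
theorem comul_mul_sum {x y : H} (r : Coalgebra.Repr k x ιr11) (s : Coalgebra.Repr k y ιr12) :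
    Δ (x * y) = ∑ i ∈ r.index, ∑ j ∈ s.index,
      (r.left i * s.left j) ⊗ₜ[k] (r.right i * s.right j) := by
  rw [WeakBialgebra.comul_mul (k := k) x y, ← r.eq, ← s.eq, Finset.sum_mul_sum]
  simp [Algebra.TensorProduct.tmul_mul_tmul]

/-- Product of two representations. -/
noncomputable def mulRepr {x y : H} (r : Coalgebra.Repr k x ιr13) (s : Coalgebra.Repr k y ιr14) :
    Coalgebra.Repr k (x * y) (ιr13 × ιr14) where
  index := r.index ×ˢ s.index
  left := fun p => r.left p.1 * s.left p.2
  right := fun p => r.right p.1 * s.right p.2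
  eq := by
    rw [Finset.sum_product, ← comul_mul_sum r s]

/-- Generic coassociativity exchange through a linear map. -/
theorem coassoc_exchange {M : Type*} [AddCommMonoid M] [Module k M]
    (φ : H ⊗[k] (H ⊗[k] H) →ₗ[k] M) {x : H} (r : Coalgebra.Repr k x ιr15)
    (a : ∀ i, Coalgebra.Repr k (r.left i) ιr16) (b : ∀ i, Coalgebra.Repr k (r.right i) ιr17) :
    ∑ i ∈ r.index, ∑ j ∈ (a i).index,
        φ ((a i).left j ⊗ₜ[k] ((a i).right j ⊗ₜ[k] r.right i)) =
      ∑ i ∈ r.index, ∑ j ∈ (b i).index,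
        φ (r.left i ⊗ₜ[k] ((b i).left j ⊗ₜ[k] (b i).right j)) := by
  have h := Coalgebra.sum_tmul_tmul_eq r a b
  apply_fun φ at h
  simpa [map_sum] using h

/-- Generic application of A3a through a linear map. -/
theorem weak_unit_exchange {M : Type*} [AddCommMonoid M] [Module k M]
    (φ : H ⊗[k] (H ⊗[k] H) →ₗ[k] M) (e e' : Coalgebra.Repr k (1 : H) ιr18)
    (a : ∀ i, Coalgebra.Repr k (e.left i) ιr19) :
    ∑ i ∈ e.index, ∑ j ∈ (a i).index,
        φ ((a i).left j ⊗ₜ[k] ((a i).right j ⊗ₜ[k] e.right i)) =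
      ∑ i ∈ e.index, ∑ j ∈ e'.index,
        φ (e.left i ⊗ₜ[k] ((e.right i * e'.left j) ⊗ₜ[k] e'.right j)) := by
  have h := weak_unit_sum e e' a
  apply_fun φ at h
  simpa [map_sum] using h

/-- Generic application of A3b through a linear map. -/
theorem weak_unit_exchange' {M : Type*} [AddCommMonoid M] [Module k M]
    (φ : H ⊗[k] (H ⊗[k] H) →ₗ[k] M) (e e' : Coalgebra.Repr k (1 : H) ιr20)
    (a : ∀ i, Coalgebra.Repr k (e.left i) ιr21) :
    ∑ i ∈ e.index, ∑ j ∈ (a i).index,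
        φ ((a i).left j ⊗ₜ[k] ((a i).right j ⊗ₜ[k] e.right i)) =
      ∑ i ∈ e.index, ∑ j ∈ e'.index,
        φ (e.left i ⊗ₜ[k] ((e'.left j * e.right i) ⊗ₜ[k] e'.right j)) := by
  have h := weak_unit_sum' e e' a
  apply_fun φ at h
  simpa [map_sum] using h

/-- L1 : `ε (x · εt y) = ε (x y)`. -/
theorem counit_mul_εt (x y : H) : ε (x * εt k H y) = ε (x * y) := by
  obtain ⟨e⟩ : Nonempty (Coalgebra.Repr k (1 : H) (H × H)) := ⟨ℛ k 1⟩
  have h := counit_mul3' x y (r := e)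
  rw [mul_one] at h
  rw [εt_eq y e, h, Finset.mul_sum, map_sum]
  exact Finset.sum_congr rfl fun i _ => by
    rw [mul_smul_comm, map_smul, smul_eq_mul, mul_comm]

/-- L2 : `ε (εs x · y) = ε (x y)`. -/
theorem counit_εs_mul (x y : H) : ε (εs k H x * y) = ε (x * y) := by
  obtain ⟨e⟩ : Nonempty (Coalgebra.Repr k (1 : H) (H × H)) := ⟨ℛ k 1⟩
  have h := counit_mul3' x y (r := e)
  rw [mul_one] at h
  rw [εs_eq x e, h, Finset.sum_mul, map_sum]
  exact Finset.sum_congr rfl fun i _ => by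
    rw [smul_mul_assoc, map_smul, smul_eq_mul]

/-- `ε ∘ εt = ε`. -/
theorem counit_εt (x : H) : ε (εt k H x) = ε x := by
  have h := counit_mul_εt (k := k) 1 x
  rwa [one_mul, one_mul] at h

/-- `ε ∘ εs = ε`. -/
theorem counit_εs (x : H) : ε (εs k H x) = ε x := by
  have h := counit_εs_mul (k := k) x 1
  rwa [mul_one, mul_one] at h

/-- `εt 1 = 1`. -/
theorem εt_one : εt k H 1 = 1 := by
  rw [εt_eq 1 (ℛ k (1 : H))]
  simpa using sum_counit_smul 1 (ℛ k (1 : H))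

/-- `εs 1 = 1`. -/
theorem εs_one : εs k H 1 = 1 := by
  rw [εs_eq 1 (ℛ k (1 : H))]
  simpa using sum_smul_counit 1 (ℛ k (1 : H))

/-- I1 : `εt (x · εt y) = εt (x y)`. -/
theorem εt_mul_εt (x y : H) : εt k H (x * εt k H y) = εt k H (x * y) := by
  obtain ⟨e⟩ : Nonempty (Coalgebra.Repr k (1 : H) (H × H)) := ⟨ℛ k (1 : H)⟩
  rw [εt_eq (x * εt k H y) e, εt_eq (x * y) e]
  refine Finset.sum_congr rfl fun i _ => ?_
  rw [← mul_assoc, counit_mul_εt, mul_assoc]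

/-- I2 : `εs (εs x · y) = εs (x y)`. -/
theorem εs_εs_mul (x y : H) : εs k H (εs k H x * y) = εs k H (x * y) := by
  obtain ⟨e⟩ : Nonempty (Coalgebra.Repr k (1 : H) (H × H)) := ⟨ℛ k (1 : H)⟩
  rw [εs_eq (εs k H x * y) e, εs_eq (x * y) e]
  refine Finset.sum_congr rfl fun i _ => ?_
  rw [mul_assoc, counit_εs_mul, ← mul_assoc]

/-- L3t : `εt (x y) = ∑ ε (x₁ y) εt (x₂)`. -/
theorem εt_mul_sum (x y : H) (r : Coalgebra.Repr k x ιr22) :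
    εt k H (x * y) = ∑ i ∈ r.index, ε (r.left i * y) • εt k H (r.right i) := by
  obtain ⟨e⟩ : Nonempty (Coalgebra.Repr k (1 : H) (H × H)) := ⟨ℛ k 1⟩
  rw [εt_eq _ e]
  have : ∀ j, ε (e.left j * (x * y)) = ∑ i ∈ r.index, ε (e.left j * r.right i) * ε (r.left i * y) := by
    intro j
    have h := counit_mul3' (e.left j) y (r := r)
    rw [← mul_assoc]
    exact h
  simp only [this, Finset.sum_smul]
  rw [Finset.sum_comm]
  refine Finset.sum_congr rfl fun i _ => ?_
  rw [εt_eq _ e, Finset.smul_sum]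
  exact Finset.sum_congr rfl fun j _ => by rw [mul_comm, mul_smul]

/-- L3s : `εs (x y) = ∑ ε (x y₂) εs (y₁)`. -/
theorem εs_mul_sum (x y : H) (s : Coalgebra.Repr k y ιr23) :
    εs k H (x * y) = ∑ i ∈ s.index, ε (x * s.right i) • εs k H (s.left i) := by
  obtain ⟨e⟩ : Nonempty (Coalgebra.Repr k (1 : H) (H × H)) := ⟨ℛ k 1⟩
  rw [εs_eq _ e]
  have : ∀ j, ε (x * y * e.right j) = ∑ i ∈ s.index, ε (x * s.right i) * ε (s.left i * e.right j) := by
    intro j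
    have h := counit_mul3' x (e.right j) (r := s)
    rw [mul_assoc] at h
    rw [mul_assoc]
    exact h
  simp only [this, Finset.sum_smul]
  rw [Finset.sum_comm]
  refine Finset.sum_congr rfl fun i _ => ?_
  rw [εs_eq _ e, Finset.smul_sum]
  exact Finset.sum_congr rfl fun j _ => by rw [mul_smul]


/-! ### Helper linear maps -/

/-- `b ↦ ε (b h)`. -/
noncomputable def εmr (h : H) : H →ₗ[k] k :=
  Coalgebra.counit ∘ₗ LinearMap.mulRight k h

/-- `b ↦ ε (h b)`. -/
noncomputable def εml (h : H) : H →ₗ[k] k :=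
  Coalgebra.counit ∘ₗ LinearMap.mulLeft k h

@[simp] theorem εmr_apply (h b : H) : εmr (k := k) h b = ε (b * h) := rfl
@[simp] theorem εml_apply (h b : H) : εml (k := k) h b = ε (h * b) := rfl

/-- `β ⊗ m ↦ f β • m`. -/
noncomputable def scFst {M : Type*} [AddCommMonoid M] [Module k M] (f : H →ₗ[k] k) :
    H ⊗[k] M →ₗ[k] M :=
  (TensorProduct.lid k M).toLinearMap ∘ₗ TensorProduct.map f LinearMap.id

/-- `m ⊗ β ↦ f β • m`. -/
noncomputable def scSnd {M : Type*} [AddCommMonoid M] [Module k M] (f : H →ₗ[k] k) :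
    M ⊗[k] H →ₗ[k] M :=
  (TensorProduct.rid k M).toLinearMap ∘ₗ TensorProduct.map LinearMap.id f

@[simp] theorem scFst_tmul {M : Type*} [AddCommMonoid M] [Module k M] (f : H →ₗ[k] k)
    (b : H) (m : M) : scFst f (b ⊗ₜ[k] m) = f b • m := rfl
@[simp] theorem scSnd_tmul {M : Type*} [AddCommMonoid M] [Module k M] (f : H →ₗ[k] k)
    (b : H) (m : M) : scSnd f (m ⊗ₜ[k] b) = f b • m := rfl

/-! ### Pointwise antipode axioms -/

section Antipode

variable {S : H →ₗ[k] H}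

/-- S1 pointwise : `∑ x₁ S(x₂) = εt x`. -/
theorem S1_sum (h1 : LinearMap.mul' k H ∘ₗ LinearMap.lTensor H S ∘ₗ Coalgebra.comul = εt k H)
    {x : H} (r : Coalgebra.Repr k x ιr24) :
    ∑ i ∈ r.index, r.left i * S (r.right i) = εt k H x := by
  have h := congrFun (congrArg DFunLike.coe h1) x
  simp only [coe_comp, Function.comp_apply] at h
  rw [← r.eq] at h
  simpa [map_sum] using h

/-- S2 pointwise : `∑ S(x₁) x₂ = εs x`. -/
theorem S2_sum (h2 : LinearMap.mul' k H ∘ₗ LinearMap.rTensor H S ∘ₗ Coalgebra.comul = εs k H)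
    {x : H} (r : Coalgebra.Repr k x ιr25) :
    ∑ i ∈ r.index, S (r.left i) * r.right i = εs k H x := by
  have h := congrFun (congrArg DFunLike.coe h2) x
  simp only [coe_comp, Function.comp_apply] at h
  rw [← r.eq] at h
  simpa [map_sum] using h

/-- S3 pointwise : `∑ S(x₁) x₂ S(x₃) = S x`. -/
theorem S3_sum
    (h3 : LinearMap.mul' k H ∘ₗ LinearMap.rTensor H (LinearMap.mul' k H)
      ∘ₗ TensorProduct.map (LinearMap.rTensor H S) S
      ∘ₗ LinearMap.rTensor H (Coalgebra.comul (R := k))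
      ∘ₗ Coalgebra.comul = S)
    {x : H} (r : Coalgebra.Repr k x ιr26) (a : ∀ i, Coalgebra.Repr k (r.left i) ιr27) :
    ∑ i ∈ r.index, ∑ j ∈ (a i).index,
      S ((a i).left j) * ((a i).right j * S (r.right i)) = S x := by
  have h := congrFun (congrArg DFunLike.coe h3) x
  simp only [coe_comp, Function.comp_apply] at h
  rw [← r.eq] at h
  simp only [map_sum, rTensor_tmul] at h
  have hL : ∀ i ∈ r.index,
      (LinearMap.mul' k H) ((LinearMap.rTensor H (LinearMap.mul' k H))
        ((TensorProduct.map (LinearMap.rTensor H S) S)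
          ((Coalgebra.comul ((r.left i)) : H ⊗[k] H) ⊗ₜ[k] r.right i)))
      = ∑ j ∈ (a i).index, S ((a i).left j) * ((a i).right j * S (r.right i)) := by
    intro i _
    rw [← (a i).eq]
    simp [sum_tmul, map_sum, mul_assoc]
  rw [Finset.sum_congr rfl hL] at h
  exact h

/-- S5 : `S x = ∑ εs(x₁) S(x₂)`. -/
theorem S5_sum (h2 : LinearMap.mul' k H ∘ₗ LinearMap.rTensor H S ∘ₗ Coalgebra.comul = εs k H)
    (h3 : LinearMap.mul' k H ∘ₗ LinearMap.rTensor H (LinearMap.mul' k H)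
      ∘ₗ TensorProduct.map (LinearMap.rTensor H S) S
      ∘ₗ LinearMap.rTensor H (Coalgebra.comul (R := k))
      ∘ₗ Coalgebra.comul = S)
    {x : H} (r : Coalgebra.Repr k x ιr28) :
    ∑ i ∈ r.index, εs k H (r.left i) * S (r.right i) = S x := by
  rw [← S3_sum h3 r (fun i => ℛ k (r.left i))]
  refine Finset.sum_congr rfl fun i _ => ?_
  rw [← S2_sum h2 (ℛ k (r.left i)), Finset.sum_mul]
  exact Finset.sum_congr rfl fun j _ => by rw [mul_assoc]

/-- S4 : `S x = ∑ S(x₁) εt(x₂)`. -/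
theorem S4_sum (h1 : LinearMap.mul' k H ∘ₗ LinearMap.lTensor H S ∘ₗ Coalgebra.comul = εt k H)
    (h3 : LinearMap.mul' k H ∘ₗ LinearMap.rTensor H (LinearMap.mul' k H)
      ∘ₗ TensorProduct.map (LinearMap.rTensor H S) S
      ∘ₗ LinearMap.rTensor H (Coalgebra.comul (R := k))
      ∘ₗ Coalgebra.comul = S)
    {x : H} (r : Coalgebra.Repr k x ιr29) :
    ∑ i ∈ r.index, S (r.left i) * εt k H (r.right i) = S x := by
  have hex := coassoc_exchange
    (LinearMap.mul' k H ∘ₗ TensorProduct.map S (LinearMap.mul' k H ∘ₗ LinearMap.lTensor H S))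
    r (fun i => ℛ k (r.left i)) (fun i => ℛ k (r.right i))
  simp only [coe_comp, Function.comp_apply, map_tmul, lTensor_tmul, mul'_apply] at hex
  rw [← S3_sum h3 r (fun i => ℛ k (r.left i)), hex]
  refine Finset.sum_congr rfl fun i _ => ?_
  rw [← S1_sum h1 (ℛ k (r.right i)), Finset.mul_sum]

end Antipode

/-! ### C1 : the images of εs and εt commute -/

theorem εs_mul_εt_comm (x y : H) : εs k H x * εt k H y = εt k H y * εs k H x := by
  obtain ⟨e⟩ : Nonempty (Coalgebra.Repr k (1 : H) (H × H)) := ⟨ℛ k (1 : H)⟩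
  obtain ⟨e'⟩ : Nonempty (Coalgebra.Repr k (1 : H) (H × H)) := ⟨ℛ k (1 : H)⟩
  set φ : H ⊗[k] (H ⊗[k] H) →ₗ[k] H :=
    scFst (εmr y) ∘ₗ LinearMap.lTensor H (scSnd (εml x)) with hφ
  have h1 := weak_unit_exchange φ e e' (fun i => ℛ k (e.left i))
  have h2 := weak_unit_exchange' φ e e' (fun i => ℛ k (e.left i))
  rw [h1] at h2
  simp only [hφ, coe_comp, Function.comp_apply, lTensor_tmul, scSnd_tmul, scFst_tmul,
    εmr_apply, εml_apply, tmul_smul, map_smul, smul_smul] at h2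
  calc εs k H x * εt k H y
      = ∑ i ∈ e.index, ∑ j ∈ e'.index,
          (ε (x * e'.right j) * ε (e.left i * y)) • (e'.left j * e.right i) := by
        rw [εs_eq x e', εt_eq y e, Finset.sum_mul_sum]
        rw [Finset.sum_comm]
        refine Finset.sum_congr rfl fun i _ => Finset.sum_congr rfl fun j _ => ?_
        rw [smul_mul_assoc, mul_smul_comm, smul_smul]
    _ = ∑ i ∈ e.index, ∑ j ∈ e'.index,
          (ε (x * e'.right j) * ε (e.left i * y)) • (e.right i * e'.left j) := h2.symm
    _ = εt k H y * εs k H x := by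
        rw [εs_eq x e', εt_eq y e, Finset.sum_mul_sum]
        refine Finset.sum_congr rfl fun i _ => Finset.sum_congr rfl fun j _ => ?_
        rw [smul_mul_assoc, mul_smul_comm, smul_smul, mul_comm]

/-! ### P1, P2, I3, I4 -/

/-- P1 : `∑ x₁ ⊗ εt (x₂) = Δ1 · (x ⊗ 1)`. -/
theorem lTensor_εt_comul (x : H) :
    LinearMap.lTensor H (εt k H) (Δ x) = Δ (1 : H) * (x ⊗ₜ[k] 1) := by
  obtain ⟨e⟩ : Nonempty (Coalgebra.Repr k (1 : H) (H × H)) := ⟨ℛ k (1 : H)⟩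
  obtain ⟨e'⟩ : Nonempty (Coalgebra.Repr k (1 : H) (H × H)) := ⟨ℛ k (1 : H)⟩
  obtain ⟨r⟩ : Nonempty (Coalgebra.Repr k x (H × H)) := ⟨ℛ k x⟩
  set φ : H ⊗[k] (H ⊗[k] H) →ₗ[k] H ⊗[k] H :=
    ∑ i ∈ r.index, TensorProduct.map (LinearMap.mulRight k (r.left i))
      (scFst (M := H) (εmr (r.right i))) with hφ
  have key := weak_unit_exchange' φ e' e (fun p => ℛ k (e'.left p))
  have hxr : Δ x = ∑ p ∈ e'.index, ∑ i ∈ r.index,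
      (e'.left p * r.left i) ⊗ₜ[k] (e'.right p * r.right i) := by
    have := comul_mul_sum e' r
    rwa [one_mul] at this
  have hL : LinearMap.lTensor H (εt k H) (Δ x)
      = ∑ p ∈ e'.index, ∑ j ∈ e.index,
          φ (e'.left p ⊗ₜ[k] ((e.left j * e'.right p) ⊗ₜ[k] e.right j)) := by
    rw [hxr]
    simp only [map_sum, lTensor_tmul, hφ, LinearMap.sum_apply, map_tmul,
      LinearMap.mulRight_apply, scFst_tmul, εmr_apply]
    refine Finset.sum_congr rfl fun p _ => ?_
    rw [Finset.sum_comm]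
    refine Finset.sum_congr rfl fun i _ => ?_
    rw [εt_eq _ e, tmul_sum]
    refine Finset.sum_congr rfl fun j _ => ?_
    rw [tmul_smul, ← mul_assoc, tmul_smul]
  rw [hL, ← key]
  rw [← e'.eq, Finset.sum_mul]
  refine Finset.sum_congr rfl fun p _ => ?_
  simp only [hφ, LinearMap.sum_apply, map_tmul, LinearMap.mulRight_apply, scFst_tmul,
    εmr_apply, Algebra.TensorProduct.tmul_mul_tmul, mul_one]
  have hmain : ∑ q ∈ (ℛ k (e'.left p)).index, ∑ i ∈ r.index,
      ε ((ℛ k (e'.left p)).right q * r.right i) • ((ℛ k (e'.left p)).left q * r.left i)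
      = e'.left p * x := by
    have h := sum_smul_counit (e'.left p * x) (mulRepr (ℛ k (e'.left p)) r)
    rw [mulRepr] at h
    rw [← h, Finset.sum_product]
  conv_rhs => rw [← hmain]
  rw [sum_tmul]
  refine Finset.sum_congr rfl fun q _ => ?_
  rw [sum_tmul]
  refine Finset.sum_congr rfl fun i _ => ?_
  rw [tmul_smul, smul_tmul']

/-- helper : rotate a triple sum. -/
theorem sum_rot {A B C M : Type*} [AddCommMonoid M] (s : Finset A) (t : Finset B) (u : Finset C)
    (f : A → B → C → M) :
    ∑ i ∈ s, ∑ p ∈ t, ∑ j ∈ u, f i p j = ∑ j ∈ u, ∑ p ∈ t, ∑ i ∈ s, f i p j :=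
  calc ∑ i ∈ s, ∑ p ∈ t, ∑ j ∈ u, f i p j
      = ∑ i ∈ s, ∑ j ∈ u, ∑ p ∈ t, f i p j :=
        Finset.sum_congr rfl fun _ _ => Finset.sum_comm
    _ = ∑ j ∈ u, ∑ i ∈ s, ∑ p ∈ t, f i p j := Finset.sum_comm
    _ = ∑ j ∈ u, ∑ p ∈ t, ∑ i ∈ s, f i p j :=
        Finset.sum_congr rfl fun _ _ => Finset.sum_comm

/-- P2 : `∑ εs (x₁) ⊗ x₂ = (1 ⊗ x) · Δ1`. -/
theorem rTensor_εs_comul (x : H) :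
    LinearMap.rTensor H (εs k H) (Δ x) = ((1 : H) ⊗ₜ[k] x) * Δ (1 : H) := by
  obtain ⟨e⟩ : Nonempty (Coalgebra.Repr k (1 : H) (H × H)) := ⟨ℛ k (1 : H)⟩
  obtain ⟨e'⟩ : Nonempty (Coalgebra.Repr k (1 : H) (H × H)) := ⟨ℛ k (1 : H)⟩
  obtain ⟨r⟩ : Nonempty (Coalgebra.Repr k x (H × H)) := ⟨ℛ k x⟩
  set φ : H ⊗[k] (H ⊗[k] H) →ₗ[k] H ⊗[k] H :=
    ∑ i ∈ r.index, LinearMap.lTensor H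
      ((LinearMap.mulLeft k (r.right i)) ∘ₗ scFst (M := H) (εml (r.left i))) with hφ
  have key := weak_unit_exchange' φ e e' (fun p => ℛ k (e.left p))
  have key2 := coassoc_exchange φ e (fun p => ℛ k (e.left p)) (fun p => ℛ k (e.right p))
  have hxr : Δ x = ∑ i ∈ r.index, ∑ p ∈ e'.index,
      (r.left i * e'.left p) ⊗ₜ[k] (r.right i * e'.right p) := by
    have := comul_mul_sum r e'
    rwa [mul_one] at this
  have hR : LinearMap.rTensor H (εs k H) (Δ x)
      = ∑ j ∈ e.index, ∑ p ∈ e'.index,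
          φ (e.left j ⊗ₜ[k] ((e'.left p * e.right j) ⊗ₜ[k] e'.right p)) := by
    rw [hxr]
    simp only [map_sum, rTensor_tmul]
    have hA : ∀ i ∈ r.index, ∀ p ∈ e'.index,
        εs k H (r.left i * e'.left p) ⊗ₜ[k] (r.right i * e'.right p)
        = ∑ j ∈ e.index, ε (r.left i * (e'.left p * e.right j)) •
            (e.left j ⊗ₜ[k] (r.right i * e'.right p)) := by
      intro i _ p _
      rw [εs_eq _ e, sum_tmul]
      refine Finset.sum_congr rfl fun j _ => ?_
      rw [smul_tmul', mul_assoc]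
    rw [Finset.sum_congr rfl fun i hi => Finset.sum_congr rfl (hA i hi)]
    rw [sum_rot]
    refine Finset.sum_congr rfl fun j _ => Finset.sum_congr rfl fun p _ => ?_
    simp only [hφ, LinearMap.sum_apply, lTensor_tmul, coe_comp, Function.comp_apply,
      scFst_tmul, εml_apply, map_smul, LinearMap.mulLeft_apply, tmul_smul]
  rw [hR, ← key, key2]
  rw [← e.eq, Finset.mul_sum]
  refine Finset.sum_congr rfl fun j _ => ?_
  simp only [hφ, LinearMap.sum_apply, lTensor_tmul, coe_comp, Function.comp_apply,
    scFst_tmul, εml_apply, map_smul, LinearMap.mulLeft_apply, tmul_smul,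
    Algebra.TensorProduct.tmul_mul_tmul, one_mul]
  have hmain : ∑ q ∈ (ℛ k (e.right j)).index, ∑ i ∈ r.index,
      ε (r.left i * (ℛ k (e.right j)).left q) • (r.right i * (ℛ k (e.right j)).right q)
      = x * e.right j := by
    have h := sum_counit_smul (x * e.right j) (mulRepr r (ℛ k (e.right j)))
    rw [mulRepr] at h
    rw [← h, Finset.sum_product, Finset.sum_comm]
  rw [← hmain, tmul_sum]
  refine Finset.sum_congr rfl fun q _ => ?_
  rw [tmul_sum]
  exact Finset.sum_congr rfl fun i _ => by rw [tmul_smul]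

/-- I3 : `Δ (εt x) = Δ1 · (εt x ⊗ 1)`. -/
theorem comul_εt (x : H) :
    Δ (εt k H x) = Δ (1 : H) * (εt k H x ⊗ₜ[k] 1) := by
  obtain ⟨e⟩ : Nonempty (Coalgebra.Repr k (1 : H) (H × H)) := ⟨ℛ k (1 : H)⟩
  obtain ⟨e'⟩ : Nonempty (Coalgebra.Repr k (1 : H) (H × H)) := ⟨ℛ k (1 : H)⟩
  set φ : H ⊗[k] (H ⊗[k] H) →ₗ[k] H ⊗[k] H := scFst (M := H ⊗[k] H) (εmr x) with hφ
  have key2 := coassoc_exchange φ e (fun p => ℛ k (e.left p)) (fun p => ℛ k (e.right p))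
  have key := weak_unit_exchange' φ e e' (fun p => ℛ k (e.left p))
  have hL : Δ (εt k H x) = ∑ j ∈ e.index, ∑ q ∈ (ℛ k (e.right j)).index,
      φ (e.left j ⊗ₜ[k] ((ℛ k (e.right j)).left q ⊗ₜ[k] (ℛ k (e.right j)).right q)) := by
    rw [εt_eq x e, map_sum]
    refine Finset.sum_congr rfl fun j _ => ?_
    rw [map_smul, ← (ℛ k (e.right j)).eq, Finset.smul_sum]
    simp only [hφ, scFst_tmul, εmr_apply]
  rw [hL, ← key2, key]
  rw [← e'.eq, Finset.sum_mul]
  rw [Finset.sum_comm]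
  refine Finset.sum_congr rfl fun p _ => ?_
  simp only [hφ, scFst_tmul, εmr_apply, Algebra.TensorProduct.tmul_mul_tmul, mul_one]
  rw [εt_eq x e, Finset.mul_sum, sum_tmul]
  refine Finset.sum_congr rfl fun j _ => ?_
  rw [mul_smul_comm, smul_tmul']

/-- I4 : `Δ (εs x) = (1 ⊗ εs x) · Δ1`. -/
theorem comul_εs (x : H) :
    Δ (εs k H x) = ((1 : H) ⊗ₜ[k] εs k H x) * Δ (1 : H) := by
  obtain ⟨e⟩ : Nonempty (Coalgebra.Repr k (1 : H) (H × H)) := ⟨ℛ k (1 : H)⟩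
  obtain ⟨e'⟩ : Nonempty (Coalgebra.Repr k (1 : H) (H × H)) := ⟨ℛ k (1 : H)⟩
  set φ : H ⊗[k] (H ⊗[k] H) →ₗ[k] H ⊗[k] H :=
    LinearMap.lTensor H (scSnd (M := H) (εml x)) with hφ
  have key := weak_unit_exchange' φ e e' (fun p => ℛ k (e.left p))
  have hL : Δ (εs k H x) = ∑ j ∈ e.index, ∑ q ∈ (ℛ k (e.left j)).index,
      φ ((ℛ k (e.left j)).left q ⊗ₜ[k] ((ℛ k (e.left j)).right q ⊗ₜ[k] e.right j)) := by
    rw [εs_eq x e, map_sum]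
    refine Finset.sum_congr rfl fun j _ => ?_
    rw [map_smul, ← (ℛ k (e.left j)).eq, Finset.smul_sum]
    simp only [hφ, lTensor_tmul, scSnd_tmul, εml_apply, tmul_smul, sum_tmul]
  rw [hL, key]
  rw [← e.eq, Finset.mul_sum]
  refine Finset.sum_congr rfl fun j _ => ?_
  simp only [hφ, lTensor_tmul, scSnd_tmul, εml_apply, tmul_smul,
    Algebra.TensorProduct.tmul_mul_tmul, one_mul]
  rw [εs_eq x e', Finset.sum_mul, tmul_sum]
  refine Finset.sum_congr rfl fun p _ => ?_
  rw [smul_mul_assoc, tmul_smul]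

/-! ### K-lemmas : interplay of S with εt, εs -/

section KLemmas

variable {S : H →ₗ[k] H} (hS : IsAntipode k H S)
include hS

/-- E2 : `∑ S(x₁) 1₁ x₂ ⊗ 1₂ = ∑ εs(x₁) ⊗ εt(x₂)`. -/
theorem E2 {x : H} (r : Coalgebra.Repr k x ιr30) (e : Coalgebra.Repr k (1 : H) ιr31) :
    ∑ i ∈ r.index, ∑ j ∈ e.index,
        (S (r.left i) * (e.left j * r.right i)) ⊗ₜ[k] e.right j
      = TensorProduct.map (εs k H) (εt k H) (Δ x) := by
  have step1 : ∀ i, ∑ j ∈ e.index, (S (r.left i) * (e.left j * r.right i)) ⊗ₜ[k] e.right j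
      = ∑ q ∈ (ℛ k (r.right i)).index,
          (S (r.left i) * (ℛ k (r.right i)).left q) ⊗ₜ[k] εt k H ((ℛ k (r.right i)).right q) := by
    intro i
    have hP : ∑ j ∈ e.index, (e.left j * r.right i) ⊗ₜ[k] e.right j
        = ∑ q ∈ (ℛ k (r.right i)).index,
            (ℛ k (r.right i)).left q ⊗ₜ[k] εt k H ((ℛ k (r.right i)).right q) := by
      have h := lTensor_εt_comul (k := k) (r.right i)
      rw [← (ℛ k (r.right i)).eq, map_sum] at h
      rw [← e.eq, Finset.sum_mul] at h
      simp only [Algebra.TensorProduct.tmul_mul_tmul] at h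
      simp only [lTensor_tmul, mul_one] at h
      exact h.symm
    have := congrArg (TensorProduct.map (LinearMap.mulLeft k (S (r.left i))) LinearMap.id) hP
    simpa [map_sum] using this
  rw [Finset.sum_congr rfl fun i _ => step1 i]
  set φ : H ⊗[k] (H ⊗[k] H) →ₗ[k] H ⊗[k] H :=
    TensorProduct.map (LinearMap.mul' k H ∘ₗ LinearMap.rTensor H S) (εt k H)
      ∘ₗ (TensorProduct.assoc k H H H).symm.toLinearMap with hφ
  have hex := coassoc_exchange φ r (fun i => ℛ k (r.left i)) (fun i => ℛ k (r.right i))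
  simp only [hφ, coe_comp, Function.comp_apply, LinearEquiv.coe_coe, assoc_symm_tmul,
    map_tmul, rTensor_tmul, mul'_apply] at hex
  rw [← hex]
  rw [← r.eq, map_sum]
  refine Finset.sum_congr rfl fun i _ => ?_
  simp only [map_tmul]
  rw [← S2_sum hS.2.1 (ℛ k (r.left i)), sum_tmul]

/-- K1d : `∑ x₁ · εt y · S(x₂) = εt (x y)`. -/
theorem K1 (x y : H) (r : Coalgebra.Repr k x ιr32) :
    ∑ i ∈ r.index, r.left i * εt k H y * S (r.right i) = εt k H (x * y) := by
  obtain ⟨e⟩ : Nonempty (Coalgebra.Repr k (1 : H) (H × H)) := ⟨ℛ k (1 : H)⟩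
  set g := εt k H y with hg
  have hgr : Δ g = ∑ j ∈ e.index, (e.left j * g) ⊗ₜ[k] e.right j := by
    rw [hg, comul_εt y, ← e.eq, Finset.sum_mul]
    exact Finset.sum_congr rfl fun j _ => by
      rw [Algebra.TensorProduct.tmul_mul_tmul, mul_one]
  set gRepr : Coalgebra.Repr k g _ :=
    ⟨e.index, fun j => e.left j * g, fun j => e.right j, hgr.symm⟩ with hgRepr
  have hS1 := S1_sum hS.1 (mulRepr r gRepr)
  rw [mulRepr] at hS1
  rw [Finset.sum_product] at hS1
  have hδ : Δ x = ∑ i ∈ r.index, ∑ j ∈ e.index,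
      (r.left i * e.left j) ⊗ₜ[k] (r.right i * e.right j) := by
    have := comul_mul_sum r e
    rwa [mul_one] at this
  set ψ : H ⊗[k] H →ₗ[k] H :=
    LinearMap.mul' k H ∘ₗ TensorProduct.map (LinearMap.mulRight k g) S with hψ
  have h1 : ∑ i ∈ r.index, r.left i * εt k H y * S (r.right i) = ψ (Δ x) := by
    rw [← r.eq, map_sum]
    exact Finset.sum_congr rfl fun i _ => by simp [hψ, hg]
  have h2 : ψ (Δ x) = εt k H (x * g) := by
    rw [hδ, map_sum, ← hS1]
    refine Finset.sum_congr rfl fun i _ => ?_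
    rw [map_sum]
    refine Finset.sum_congr rfl fun j _ => ?_
    simp only [hψ, coe_comp, Function.comp_apply, map_tmul, LinearMap.mulRight_apply,
      mul'_apply, hgRepr]
    rw [mul_assoc (r.left i) (e.left j) g, ← mul_assoc]
  rw [h1, h2, hg, εt_mul_εt]

/-- K2d : `∑ S(y₁) · εs x · y₂ = εs (x y)`. -/
theorem K2 (x y : H) (s : Coalgebra.Repr k y ιr33) :
    ∑ i ∈ s.index, S (s.left i) * εs k H x * s.right i = εs k H (x * y) := by
  obtain ⟨e⟩ : Nonempty (Coalgebra.Repr k (1 : H) (H × H)) := ⟨ℛ k (1 : H)⟩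
  have hE := E2 hS s e
  rw [← s.eq, map_sum] at hE
  simp only [map_tmul] at hE
  have h := congrArg (scSnd (M := H) (εml x)) hE
  simp only [map_sum, scSnd_tmul, εml_apply] at h
  calc ∑ i ∈ s.index, S (s.left i) * εs k H x * s.right i
      = ∑ i ∈ s.index, ∑ j ∈ e.index,
          ε (x * e.right j) • (S (s.left i) * (e.left j * s.right i)) := by
        refine Finset.sum_congr rfl fun i _ => ?_
        rw [εs_eq x e, Finset.mul_sum, Finset.sum_mul]
        refine Finset.sum_congr rfl fun j _ => ?_
        rw [mul_smul_comm, smul_mul_assoc, mul_assoc]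
    _ = ∑ i ∈ s.index, ε (x * εt k H (s.right i)) • εs k H (s.left i) := h
    _ = εs k H (x * y) := by
        rw [εs_mul_sum x y s]
        exact Finset.sum_congr rfl fun i _ => by rw [counit_mul_εt]

/-- K7 : `∑ S(x₁) εt (x₂ y) = εt y · S x`. -/
theorem K7 (x y : H) (r : Coalgebra.Repr k x ιr34) :
    ∑ i ∈ r.index, S (r.left i) * εt k H (r.right i * y) = εt k H y * S x := by
  have step1 : ∀ i, εt k H (r.right i * y) = ∑ q ∈ (ℛ k (r.right i)).index,
      (ℛ k (r.right i)).left q * εt k H y * S ((ℛ k (r.right i)).right q) :=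
    fun i => (K1 hS (r.right i) y (ℛ k (r.right i))).symm
  set φ : H ⊗[k] (H ⊗[k] H) →ₗ[k] H :=
    LinearMap.mul' k H ∘ₗ TensorProduct.map
      (LinearMap.mulRight k (εt k H y) ∘ₗ LinearMap.mul' k H ∘ₗ LinearMap.rTensor H S) S
      ∘ₗ (TensorProduct.assoc k H H H).symm.toLinearMap with hφ
  have hex := coassoc_exchange φ r (fun i => ℛ k (r.left i)) (fun i => ℛ k (r.right i))
  simp only [hφ, coe_comp, Function.comp_apply, LinearEquiv.coe_coe, assoc_symm_tmul,
    map_tmul, rTensor_tmul, mul'_apply, LinearMap.mulRight_apply] at hex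
  calc ∑ i ∈ r.index, S (r.left i) * εt k H (r.right i * y)
      = ∑ i ∈ r.index, ∑ q ∈ (ℛ k (r.right i)).index,
          S (r.left i) * (ℛ k (r.right i)).left q * εt k H y * S ((ℛ k (r.right i)).right q) := by
        refine Finset.sum_congr rfl fun i _ => ?_
        rw [step1 i, Finset.mul_sum]
        exact Finset.sum_congr rfl fun q _ => by rw [← mul_assoc, ← mul_assoc]
    _ = ∑ i ∈ r.index, ∑ q ∈ (ℛ k (r.left i)).index,
          S ((ℛ k (r.left i)).left q) * (ℛ k (r.left i)).right q * εt k H y * S (r.right i) := by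
        rw [← hex]
    _ = ∑ i ∈ r.index, εs k H (r.left i) * εt k H y * S (r.right i) := by
        refine Finset.sum_congr rfl fun i _ => ?_
        rw [← S2_sum hS.2.1 (ℛ k (r.left i)), Finset.sum_mul, Finset.sum_mul]
    _ = ∑ i ∈ r.index, εt k H y * εs k H (r.left i) * S (r.right i) := by
        refine Finset.sum_congr rfl fun i _ => ?_
        rw [εs_mul_εt_comm]
    _ = εt k H y * S x := by
        rw [← S5_sum hS.2.1 hS.2.2 r, Finset.mul_sum]
        exact Finset.sum_congr rfl fun i _ => by rw [mul_assoc]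

/-- K3 : `∑ S(y₁) S(x₁) εt (x₂ y₂) = S y · S x`. -/
theorem K3 (x y : H) (r : Coalgebra.Repr k x ιr35) (s : Coalgebra.Repr k y ιr36) :
    ∑ j ∈ s.index, ∑ i ∈ r.index,
        S (s.left j) * S (r.left i) * εt k H (r.right i * s.right j) = S y * S x := by
  calc ∑ j ∈ s.index, ∑ i ∈ r.index,
        S (s.left j) * S (r.left i) * εt k H (r.right i * s.right j)
      = ∑ j ∈ s.index, S (s.left j) * (εt k H (s.right j) * S x) := by
        refine Finset.sum_congr rfl fun j _ => ?_
        rw [← K7 hS x (s.right j) r, Finset.mul_sum]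
        exact Finset.sum_congr rfl fun i _ => by rw [mul_assoc]
    _ = S y * S x := by
        rw [← S4_sum hS.1 hS.2.2 s, Finset.sum_mul]
        exact Finset.sum_congr rfl fun j _ => by rw [mul_assoc]

/-- `S 1 = 1`. -/
theorem S_one : S 1 = 1 := by
  obtain ⟨e⟩ : Nonempty (Coalgebra.Repr k (1 : H) (H × H)) := ⟨ℛ k (1 : H)⟩
  have key : ∑ j ∈ e.index, εs k H (e.left j) ⊗ₜ[k] e.right j
      = ∑ j ∈ e.index, e.left j ⊗ₜ[k] e.right j := by
    have hP := rTensor_εs_comul (k := k) (1 : H)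
    rw [← Algebra.TensorProduct.one_def, one_mul, ← e.eq, map_sum] at hP
    simpa only [rTensor_tmul] using hP
  have key2 := congrArg (fun t => (LinearMap.mul' k H) ((LinearMap.lTensor H S) t)) key
  simp only [map_sum, lTensor_tmul, mul'_apply] at key2
  calc S 1 = ∑ j ∈ e.index, εs k H (e.left j) * S (e.right j) :=
        (S5_sum hS.2.1 hS.2.2 e).symm
    _ = ∑ j ∈ e.index, e.left j * S (e.right j) := key2
    _ = εt k H 1 := S1_sum hS.1 e
    _ = 1 := εt_one

/-- `ε ∘ S = ε`. -/
theorem counit_S (x : H) : ε (S x) = ε x := by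
  obtain ⟨r⟩ : Nonempty (Coalgebra.Repr k x (H × H)) := ⟨ℛ k x⟩
  rw [← S5_sum hS.2.1 hS.2.2 r, map_sum]
  rw [Finset.sum_congr rfl fun i (_ : i ∈ r.index) => counit_εs_mul (r.left i) (S (r.right i))]
  rw [← map_sum, S1_sum hS.1 r, counit_εt]

end KLemmas

section Gone

variable {S : H →ₗ[k] H} (hS : IsAntipode k H S)
include hS

/-- G1 : the antipode is antimultiplicative. -/
theorem S_mul (x y : H) : S (x * y) = S y * S x := by
  obtain ⟨r⟩ : Nonempty (Coalgebra.Repr k x (H × H)) := ⟨ℛ k x⟩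
  obtain ⟨s⟩ : Nonempty (Coalgebra.Repr k y (H × H)) := ⟨ℛ k y⟩
  have key : S y * S x = ∑ i ∈ r.index, ∑ j ∈ s.index,
      εs k H (r.left i * s.left j) * S (r.right i * s.right j) := by
    calc S y * S x
        = ∑ j ∈ s.index, ∑ i ∈ r.index,
            S (s.left j) * S (r.left i) * εt k H (r.right i * s.right j) :=
          (K3 hS x y r s).symm
      _ = ∑ j ∈ s.index, ∑ i ∈ r.index, ∑ q ∈ (ℛ k (r.right i)).index,
            ∑ p ∈ (ℛ k (s.right j)).index,
            S (s.left j) * (S (r.left i) *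
              (((ℛ k (r.right i)).left q * (ℛ k (s.right j)).left p) *
                S ((ℛ k (r.right i)).right q * (ℛ k (s.right j)).right p))) := by
          refine Finset.sum_congr rfl fun j _ => Finset.sum_congr rfl fun i _ => ?_
          have h1 := S1_sum hS.1 (mulRepr (ℛ k (r.right i)) (ℛ k (s.right j)))
          rw [mulRepr] at h1
          rw [← h1, Finset.sum_product, Finset.mul_sum]
          refine Finset.sum_congr rfl fun q _ => ?_
          rw [Finset.mul_sum]
          refine Finset.sum_congr rfl fun p _ => ?_
          rw [mul_assoc]
      _ = ∑ j ∈ s.index, ∑ p ∈ (ℛ k (s.right j)).index, ∑ i ∈ r.index,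
            ∑ q ∈ (ℛ k (r.right i)).index,
            S (s.left j) * (S (r.left i) *
              (((ℛ k (r.right i)).left q * (ℛ k (s.right j)).left p) *
                S ((ℛ k (r.right i)).right q * (ℛ k (s.right j)).right p))) := by
          refine Finset.sum_congr rfl fun j _ => ?_
          rw [Finset.sum_congr rfl fun i (_ : i ∈ r.index) =>
            (Finset.sum_comm (s := (ℛ k (r.right i)).index)
              (t := (ℛ k (s.right j)).index) (f := fun q p => S (s.left j) * (S (r.left i) *
              (((ℛ k (r.right i)).left q * (ℛ k (s.right j)).left p) *
                S ((ℛ k (r.right i)).right q * (ℛ k (s.right j)).right p)))))]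
          exact Finset.sum_comm
      _ = ∑ j ∈ s.index, ∑ p ∈ (ℛ k (s.right j)).index, ∑ i ∈ r.index,
            ∑ q ∈ (ℛ k (r.left i)).index,
            S (s.left j) * (S ((ℛ k (r.left i)).left q) *
              ((((ℛ k (r.left i)).right q * (ℛ k (s.right j)).left p)) *
                S (r.right i * (ℛ k (s.right j)).right p))) := by
          refine Finset.sum_congr rfl fun j _ => Finset.sum_congr rfl fun p _ => ?_
          have hex := coassoc_exchange
            (LinearMap.mulLeft k (S (s.left j)) ∘ₗ LinearMap.mul' k H ∘ₗ
              TensorProduct.map S (LinearMap.mul' k H ∘ₗ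
                TensorProduct.map (LinearMap.mulRight k ((ℛ k (s.right j)).left p))
                  (S ∘ₗ LinearMap.mulRight k ((ℛ k (s.right j)).right p))))
            r (fun i => ℛ k (r.left i)) (fun i => ℛ k (r.right i))
          simp only [coe_comp, Function.comp_apply, map_tmul, mul'_apply,
            LinearMap.mulRight_apply, LinearMap.mulLeft_apply] at hex
          exact hex.symm
      _ = ∑ j ∈ s.index, ∑ p ∈ (ℛ k (s.right j)).index, ∑ i ∈ r.index,
            S (s.left j) * (εs k H (r.left i) *
              ((ℛ k (s.right j)).left p * S (r.right i * (ℛ k (s.right j)).right p))) := by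
          refine Finset.sum_congr rfl fun j _ => Finset.sum_congr rfl fun p _ =>
            Finset.sum_congr rfl fun i _ => ?_
          rw [Finset.sum_congr rfl fun q (_ : q ∈ (ℛ k (r.left i)).index) => by
            rw [mul_assoc ((ℛ k (r.left i)).right q), ← mul_assoc (S ((ℛ k (r.left i)).left q))]]
          rw [← Finset.mul_sum, ← Finset.sum_mul, S2_sum hS.2.1 (ℛ k (r.left i))]
      _ = ∑ i ∈ r.index, ∑ j ∈ s.index, ∑ p ∈ (ℛ k (s.right j)).index,
            S (s.left j) * (εs k H (r.left i) *
              ((ℛ k (s.right j)).left p * S (r.right i * (ℛ k (s.right j)).right p))) := by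
          rw [Finset.sum_congr rfl fun j (_ : j ∈ s.index) => Finset.sum_comm]
          exact Finset.sum_comm
      _ = ∑ i ∈ r.index, ∑ j ∈ s.index, ∑ p ∈ (ℛ k (s.left j)).index,
            S ((ℛ k (s.left j)).left p) * (εs k H (r.left i) *
              ((ℛ k (s.left j)).right p * S (r.right i * s.right j))) := by
          refine Finset.sum_congr rfl fun i _ => ?_
          have hex := coassoc_exchange
            (LinearMap.mul' k H ∘ₗ TensorProduct.map S
              (LinearMap.mulLeft k (εs k H (r.left i)) ∘ₗ LinearMap.mul' k H ∘ₗ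
                TensorProduct.map LinearMap.id (S ∘ₗ LinearMap.mulLeft k (r.right i))))
            s (fun j => ℛ k (s.left j)) (fun j => ℛ k (s.right j))
          simp only [coe_comp, Function.comp_apply, map_tmul, mul'_apply, LinearMap.id_coe,
            id_eq, LinearMap.mulLeft_apply] at hex
          exact hex.symm
      _ = ∑ i ∈ r.index, ∑ j ∈ s.index,
            εs k H (r.left i * s.left j) * S (r.right i * s.right j) := by
          refine Finset.sum_congr rfl fun i _ => Finset.sum_congr rfl fun j _ => ?_
          rw [← K2 hS (r.left i) (s.left j) (ℛ k (s.left j)), Finset.sum_mul]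
          refine Finset.sum_congr rfl fun p _ => ?_
          rw [mul_assoc (S ((ℛ k (s.left j)).left p) * εs k H (r.left i)),
            mul_assoc (S ((ℛ k (s.left j)).left p))]
  have h5 := S5_sum hS.2.1 hS.2.2 (mulRepr r s)
  rw [mulRepr] at h5
  rw [← h5, Finset.sum_product, key]

end Gone

/-! ### Dual lemmas, for the coalgebra antihomomorphism property -/

/-- D-C1 : `∑ εs(x₁) ⊗ εt(x₂) = ∑ εs(x₂) ⊗ εt(x₁)`. -/
theorem DC1 {x : H} (r : Coalgebra.Repr k x ιr37) :
    ∑ i ∈ r.index, εs k H (r.left i) ⊗ₜ[k] εt k H (r.right i)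
      = ∑ i ∈ r.index, εs k H (r.right i) ⊗ₜ[k] εt k H (r.left i) := by
  obtain ⟨e⟩ : Nonempty (Coalgebra.Repr k (1 : H) (H × H)) := ⟨ℛ k (1 : H)⟩
  obtain ⟨e'⟩ : Nonempty (Coalgebra.Repr k (1 : H) (H × H)) := ⟨ℛ k (1 : H)⟩
  have expand : ∀ a b : H, εs k H a ⊗ₜ[k] εt k H b
      = ∑ j ∈ e.index, ∑ p ∈ e'.index,
          (ε (a * e.right j) * ε (e'.left p * b)) • (e.left j ⊗ₜ[k] e'.right p) := by
    intro a b
    rw [εs_eq a e, εt_eq b e', sum_tmul]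
    refine Finset.sum_congr rfl fun j _ => ?_
    rw [tmul_sum]
    refine Finset.sum_congr rfl fun p _ => ?_
    rw [tmul_smul, ← smul_tmul', smul_smul, mul_comm]
  have flip1 : ∑ i ∈ r.index, εs k H (r.left i) ⊗ₜ[k] εt k H (r.right i)
      = ∑ j ∈ e.index, ∑ p ∈ e'.index,
          ε (e'.left p * x * e.right j) • (e.left j ⊗ₜ[k] e'.right p) := by
    rw [Finset.sum_congr rfl fun i (_ : i ∈ r.index) => expand (r.left i) (r.right i),
      sum_rot, Finset.sum_comm]
    refine Finset.sum_congr rfl fun j _ => Finset.sum_congr rfl fun p _ => ?_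
    rw [← Finset.sum_smul]
    congr 1
    rw [counit_mul3' (e'.left p) (e.right j) (r := r)]
    exact Finset.sum_congr rfl fun i _ => mul_comm _ _
  have flip2 : ∑ i ∈ r.index, εs k H (r.right i) ⊗ₜ[k] εt k H (r.left i)
      = ∑ j ∈ e.index, ∑ p ∈ e'.index,
          ε (e'.left p * x * e.right j) • (e.left j ⊗ₜ[k] e'.right p) := by
    rw [Finset.sum_congr rfl fun i (_ : i ∈ r.index) => expand (r.right i) (r.left i),
      sum_rot, Finset.sum_comm]
    refine Finset.sum_congr rfl fun j _ => Finset.sum_congr rfl fun p _ => ?_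
    rw [← Finset.sum_smul]
    congr 1
    rw [counit_mul3 (e'.left p) (e.right j) (r := r)]
    exact Finset.sum_congr rfl fun i _ => mul_comm _ _
  rw [flip1, flip2]

section DualAntipode

variable {S : H →ₗ[k] H} (hS : IsAntipode k H S)
include hS

/-- D-K1 : `∑ x₁ S(x₃) ⊗ εt(x₂) = Δ (εt x)`. -/
theorem DK1 {x : H} (r : Coalgebra.Repr k x ιr38) (a : ∀ i, Coalgebra.Repr k (r.left i) ιr39) :
    ∑ i ∈ r.index, ∑ q ∈ (a i).index,
        ((a i).left q * S (r.right i)) ⊗ₜ[k] εt k H ((a i).right q)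
      = Δ (εt k H x) := by
  obtain ⟨e⟩ : Nonempty (Coalgebra.Repr k (1 : H) (H × H)) := ⟨ℛ k (1 : H)⟩
  have step1 : ∀ i ∈ r.index, ∑ q ∈ (a i).index,
      ((a i).left q * S (r.right i)) ⊗ₜ[k] εt k H ((a i).right q)
      = ∑ j ∈ e.index, ((e.left j * r.left i) * S (r.right i)) ⊗ₜ[k] e.right j := by
    intro i _
    have hP := lTensor_εt_comul (k := k) (r.left i)
    rw [← (a i).eq, map_sum] at hP
    rw [← e.eq, Finset.sum_mul] at hP
    simp only [Algebra.TensorProduct.tmul_mul_tmul] at hP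
    simp only [lTensor_tmul, mul_one] at hP
    have := congrArg (TensorProduct.map (LinearMap.mulRight k (S (r.right i))) LinearMap.id) hP
    simpa [map_sum] using this
  rw [Finset.sum_congr rfl step1, Finset.sum_comm]
  have : ∀ j ∈ e.index, ∑ i ∈ r.index,
      ((e.left j * r.left i) * S (r.right i)) ⊗ₜ[k] e.right j
      = (e.left j * εt k H x) ⊗ₜ[k] e.right j := by
    intro j _
    rw [← S1_sum hS.1 r, Finset.mul_sum, sum_tmul]
    exact Finset.sum_congr rfl fun i _ => by rw [mul_assoc]
  rw [Finset.sum_congr rfl this, comul_εt, ← e.eq, Finset.sum_mul]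
  exact Finset.sum_congr rfl fun j _ => by
    rw [Algebra.TensorProduct.tmul_mul_tmul, mul_one]

/-- D-K2 : `∑ εs(x₂) ⊗ S(x₁) x₃ = Δ (εs x)`. -/
theorem DK2 {x : H} (r : Coalgebra.Repr k x ιr40) (g : ∀ i, Coalgebra.Repr k (r.right i) ιr41) :
    ∑ i ∈ r.index, ∑ t ∈ (g i).index,
        εs k H ((g i).left t) ⊗ₜ[k] (S (r.left i) * (g i).right t)
      = Δ (εs k H x) := by
  obtain ⟨e⟩ : Nonempty (Coalgebra.Repr k (1 : H) (H × H)) := ⟨ℛ k (1 : H)⟩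
  have step1 : ∀ i ∈ r.index, ∑ t ∈ (g i).index,
      εs k H ((g i).left t) ⊗ₜ[k] (S (r.left i) * (g i).right t)
      = ∑ j ∈ e.index, e.left j ⊗ₜ[k] (S (r.left i) * (r.right i * e.right j)) := by
    intro i _
    have hP := rTensor_εs_comul (k := k) (r.right i)
    rw [← (g i).eq, map_sum] at hP
    rw [← e.eq, Finset.mul_sum] at hP
    simp only [Algebra.TensorProduct.tmul_mul_tmul] at hP
    simp only [rTensor_tmul, one_mul] at hP
    have := congrArg (TensorProduct.map LinearMap.id (LinearMap.mulLeft k (S (r.left i)))) hP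
    simpa [map_sum] using this
  rw [Finset.sum_congr rfl step1, Finset.sum_comm]
  have : ∀ j ∈ e.index, ∑ i ∈ r.index,
      e.left j ⊗ₜ[k] (S (r.left i) * (r.right i * e.right j))
      = e.left j ⊗ₜ[k] (εs k H x * e.right j) := by
    intro j _
    rw [← S2_sum hS.2.1 r, Finset.sum_mul, tmul_sum]
    exact Finset.sum_congr rfl fun i _ => by rw [mul_assoc]
  rw [Finset.sum_congr rfl this, comul_εs, ← e.eq, Finset.mul_sum]
  exact Finset.sum_congr rfl fun j _ => by
    rw [Algebra.TensorProduct.tmul_mul_tmul, one_mul]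

/-- DS2 : `∑ (S(w₁) ⊗ h) Δ(w₂) = ∑ εs(w₁) ⊗ h w₂`. -/
theorem DS2 (h : H) {w : H} (c : Coalgebra.Repr k w ιr42) :
    ∑ t ∈ c.index, ((S (c.left t)) ⊗ₜ[k] h) * Δ (c.right t)
      = ∑ t ∈ c.index, εs k H (c.left t) ⊗ₜ[k] (h * c.right t) := by
  set ψ : H ⊗[k] (H ⊗[k] H) →ₗ[k] H ⊗[k] H :=
    TensorProduct.map (LinearMap.mul' k H ∘ₗ LinearMap.rTensor H S)
        (LinearMap.mulLeft k h)
      ∘ₗ (TensorProduct.assoc k H H H).symm.toLinearMap with hψ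
  have hex := coassoc_exchange ψ c (fun t => ℛ k (c.left t)) (fun t => ℛ k (c.right t))
  simp only [hψ, coe_comp, Function.comp_apply, LinearEquiv.coe_coe, assoc_symm_tmul,
    map_tmul, mul'_apply, rTensor_tmul, LinearMap.mulLeft_apply] at hex
  calc ∑ t ∈ c.index, ((S (c.left t)) ⊗ₜ[k] h) * Δ (c.right t)
      = ∑ t ∈ c.index, ∑ u ∈ (ℛ k (c.right t)).index,
          (S (c.left t) * (ℛ k (c.right t)).left u) ⊗ₜ[k]
            (h * (ℛ k (c.right t)).right u) := by
        refine Finset.sum_congr rfl fun t _ => ?_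
        rw [← (ℛ k (c.right t)).eq, Finset.mul_sum]
        exact Finset.sum_congr rfl fun u _ => by
          rw [Algebra.TensorProduct.tmul_mul_tmul]
    _ = ∑ t ∈ c.index, ∑ u ∈ (ℛ k (c.left t)).index,
          (S ((ℛ k (c.left t)).left u) * (ℛ k (c.left t)).right u) ⊗ₜ[k]
            (h * c.right t) := hex.symm
    _ = ∑ t ∈ c.index, εs k H (c.left t) ⊗ₜ[k] (h * c.right t) := by
        refine Finset.sum_congr rfl fun t _ => ?_
        rw [← S2_sum hS.2.1 (ℛ k (c.left t)), sum_tmul]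

end DualAntipode

section DualAntipode2

variable {S : H →ₗ[k] H} (hS : IsAntipode k H S)
include hS

/-- D-K7 : `∑ (S(w₁) ⊗ 1) Δ(εt w₂) = ∑ S(w₂) ⊗ εt(w₁)`. -/
theorem DK7 {w : H} (rw : Coalgebra.Repr k w ιr43) :
    ∑ q ∈ rw.index, ((S (rw.left q)) ⊗ₜ[k] (1 : H)) * Δ (εt k H (rw.right q))
      = ∑ q ∈ rw.index, S (rw.right q) ⊗ₜ[k] εt k H (rw.left q) := by
  set χ : H →ₗ[k] H ⊗[k] H :=
    (TensorProduct.comm k H H).toLinearMap ∘ₗ TensorProduct.map (εt k H) S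
      ∘ₗ Coalgebra.comul with hχ
  have hχ_apply : ∀ v : H, χ v = ∑ t ∈ (ℛ k v).index,
      S ((ℛ k v).right t) ⊗ₜ[k] εt k H ((ℛ k v).left t) := by
    intro v
    rw [hχ]
    simp only [coe_comp, Function.comp_apply]
    rw [← (ℛ k v).eq]
    simp [map_sum]
  calc ∑ q ∈ rw.index, ((S (rw.left q)) ⊗ₜ[k] (1 : H)) * Δ (εt k H (rw.right q))
      -- step 1-2 : expand Δ εt via DK1, exchange inside `rw.right q`
      _ = ∑ q ∈ rw.index, ∑ i ∈ (ℛ k (rw.right q)).index,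
            ((S (rw.left q) * (ℛ k (rw.right q)).left i) ⊗ₜ[k] (1 : H)) *
              χ ((ℛ k (rw.right q)).right i) := by
        refine Finset.sum_congr rfl fun q _ => ?_
        rw [← DK1 hS (ℛ k (rw.right q)) (fun i => ℛ k ((ℛ k (rw.right q)).left i))]
        simp only [Finset.mul_sum]
        set φq : H ⊗[k] (H ⊗[k] H) →ₗ[k] H ⊗[k] H :=
          TensorProduct.map
            (LinearMap.mulLeft k (S (rw.left q)) ∘ₗ LinearMap.mul' k H ∘ₗ LinearMap.lTensor H S)
            (εt k H)
          ∘ₗ (TensorProduct.assoc k H H H).symm.toLinearMap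
          ∘ₗ LinearMap.lTensor H (TensorProduct.comm k H H).toLinearMap with hφq
        have hex := coassoc_exchange φq (ℛ k (rw.right q))
          (fun i => ℛ k ((ℛ k (rw.right q)).left i))
          (fun i => ℛ k ((ℛ k (rw.right q)).right i))
        simp only [hφq, coe_comp, Function.comp_apply, LinearEquiv.coe_coe, lTensor_tmul,
          comm_tmul, assoc_symm_tmul, map_tmul, mul'_apply, LinearMap.mulLeft_apply] at hex
        calc ∑ i ∈ (ℛ k (rw.right q)).index, ∑ t ∈ (ℛ k ((ℛ k (rw.right q)).left i)).index,
              (S (rw.left q) ⊗ₜ[k] (1:H)) *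
                (((ℛ k ((ℛ k (rw.right q)).left i)).left t * S ((ℛ k (rw.right q)).right i)) ⊗ₜ[k]
                  εt k H ((ℛ k ((ℛ k (rw.right q)).left i)).right t))
            _ = ∑ i ∈ (ℛ k (rw.right q)).index, ∑ t ∈ (ℛ k ((ℛ k (rw.right q)).left i)).index,
                (S (rw.left q) * ((ℛ k ((ℛ k (rw.right q)).left i)).left t *
                    S ((ℛ k (rw.right q)).right i))) ⊗ₜ[k]
                  εt k H ((ℛ k ((ℛ k (rw.right q)).left i)).right t) := by
              refine Finset.sum_congr rfl fun i _ => Finset.sum_congr rfl fun t _ => ?_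
              rw [Algebra.TensorProduct.tmul_mul_tmul, one_mul]
            _ = ∑ i ∈ (ℛ k (rw.right q)).index,
                ∑ t ∈ (ℛ k ((ℛ k (rw.right q)).right i)).index,
                (S (rw.left q) * ((ℛ k (rw.right q)).left i *
                    S ((ℛ k ((ℛ k (rw.right q)).right i)).right t))) ⊗ₜ[k]
                  εt k H ((ℛ k ((ℛ k (rw.right q)).right i)).left t) := hex
            _ = ∑ i ∈ (ℛ k (rw.right q)).index,
                ((S (rw.left q) * (ℛ k (rw.right q)).left i) ⊗ₜ[k] (1 : H)) *
                  χ ((ℛ k (rw.right q)).right i) := by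
              refine Finset.sum_congr rfl fun i _ => ?_
              rw [hχ_apply, Finset.mul_sum]
              refine Finset.sum_congr rfl fun t _ => ?_
              rw [Algebra.TensorProduct.tmul_mul_tmul, one_mul, mul_assoc]
      -- step 3 : top-level exchange, then collapse with S2
      _ = ∑ q ∈ rw.index, ((εs k H (rw.left q)) ⊗ₜ[k] (1 : H)) * χ (rw.right q) := by
        set ι : H ⊗[k] H →ₗ[k] H ⊗[k] H :=
          (TensorProduct.mk k H H).flip 1 ∘ₗ LinearMap.mul' k H ∘ₗ LinearMap.rTensor H S with hι
        set Θ : H ⊗[k] (H ⊗[k] H) →ₗ[k] H ⊗[k] H :=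
          LinearMap.mul' k (H ⊗[k] H) ∘ₗ TensorProduct.map ι χ
            ∘ₗ (TensorProduct.assoc k H H H).symm.toLinearMap with hΘ
        have hex := coassoc_exchange Θ rw
          (fun q => ℛ k (rw.left q)) (fun q => ℛ k (rw.right q))
        simp only [hΘ, hι, coe_comp, Function.comp_apply, LinearEquiv.coe_coe,
          assoc_symm_tmul, map_tmul, mul'_apply, rTensor_tmul, TensorProduct.mk_apply,
          flip_apply] at hex
        calc ∑ q ∈ rw.index, ∑ i ∈ (ℛ k (rw.right q)).index,
              ((S (rw.left q) * (ℛ k (rw.right q)).left i) ⊗ₜ[k] (1 : H)) *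
                χ ((ℛ k (rw.right q)).right i)
            _ = ∑ q ∈ rw.index, ∑ i ∈ (ℛ k (rw.left q)).index,
                ((S ((ℛ k (rw.left q)).left i) * (ℛ k (rw.left q)).right i) ⊗ₜ[k] (1 : H)) *
                  χ (rw.right q) := hex.symm
            _ = ∑ q ∈ rw.index, ((εs k H (rw.left q)) ⊗ₜ[k] (1 : H)) * χ (rw.right q) := by
              refine Finset.sum_congr rfl fun q _ => ?_
              rw [← S2_sum hS.2.1 (ℛ k (rw.left q)), ← Finset.sum_mul, sum_tmul]
      -- step 4-5 : expand χ, exchange Ξ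
      _ = ∑ q ∈ rw.index, ∑ i ∈ (ℛ k (rw.left q)).index,
            (εs k H ((ℛ k (rw.left q)).left i) * S (rw.right q)) ⊗ₜ[k]
              εt k H ((ℛ k (rw.left q)).right i) := by
        set Ξ : H ⊗[k] (H ⊗[k] H) →ₗ[k] H ⊗[k] H :=
          TensorProduct.map (LinearMap.mul' k H ∘ₗ TensorProduct.map (εs k H) S) (εt k H)
            ∘ₗ (TensorProduct.assoc k H H H).symm.toLinearMap
            ∘ₗ LinearMap.lTensor H (TensorProduct.comm k H H).toLinearMap with hΞ
        have hex := coassoc_exchange Ξ rw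
          (fun q => ℛ k (rw.left q)) (fun q => ℛ k (rw.right q))
        simp only [hΞ, coe_comp, Function.comp_apply, LinearEquiv.coe_coe, lTensor_tmul,
          comm_tmul, assoc_symm_tmul, map_tmul, mul'_apply] at hex
        refine Eq.trans ?_ hex.symm
        refine Finset.sum_congr rfl fun q _ => ?_
        rw [hχ_apply, Finset.mul_sum]
        refine Finset.sum_congr rfl fun t _ => ?_
        rw [Algebra.TensorProduct.tmul_mul_tmul, one_mul]
      -- step 6 : DC1
      _ = ∑ q ∈ rw.index, ∑ i ∈ (ℛ k (rw.left q)).index,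
            (εs k H ((ℛ k (rw.left q)).right i) * S (rw.right q)) ⊗ₜ[k]
              εt k H ((ℛ k (rw.left q)).left i) := by
        refine Finset.sum_congr rfl fun q _ => ?_
        have h := congrArg
          (TensorProduct.map (LinearMap.mulRight k (S (rw.right q))) LinearMap.id)
          (DC1 (ℛ k (rw.left q)))
        simpa [map_sum] using h
      -- step 7 : exchange Ξ', collapse with S5
      _ = ∑ q ∈ rw.index, S (rw.right q) ⊗ₜ[k] εt k H (rw.left q) := by
        set Ξ' : H ⊗[k] (H ⊗[k] H) →ₗ[k] H ⊗[k] H :=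
          TensorProduct.map (LinearMap.mul' k H ∘ₗ TensorProduct.map (εs k H) S) (εt k H)
            ∘ₗ (TensorProduct.comm k H (H ⊗[k] H)).toLinearMap with hΞ'
        have hex := coassoc_exchange Ξ' rw
          (fun q => ℛ k (rw.left q)) (fun q => ℛ k (rw.right q))
        simp only [hΞ', coe_comp, Function.comp_apply, LinearEquiv.coe_coe, comm_tmul,
          map_tmul, mul'_apply] at hex
        rw [hex]
        refine Finset.sum_congr rfl fun q _ => ?_
        rw [← S5_sum hS.2.1 hS.2.2 (ℛ k (rw.right q)), sum_tmul]

end DualAntipode2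

section DualAntipode3

variable {S : H →ₗ[k] H} (hS : IsAntipode k H S)
include hS

/-- D-K3 : `∑ (S(x₂) ⊗ S(x₁)) Δ(εt x₃) = ∑ S(x₂) ⊗ S(x₁)`. -/
theorem DK3 {x : H} (r : Coalgebra.Repr k x ιr44) (b : ∀ i, Coalgebra.Repr k (r.right i) ιr45) :
    ∑ i ∈ r.index, ∑ q ∈ (b i).index,
        ((S ((b i).left q)) ⊗ₜ[k] (S (r.left i))) * Δ (εt k H ((b i).right q))
      = ∑ i ∈ r.index, S (r.right i) ⊗ₜ[k] S (r.left i) := by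
  have step1 : ∀ i ∈ r.index, ∑ q ∈ (b i).index,
      ((S ((b i).left q)) ⊗ₜ[k] (S (r.left i))) * Δ (εt k H ((b i).right q))
      = ∑ q ∈ (b i).index, S ((b i).right q) ⊗ₜ[k] (S (r.left i) * εt k H ((b i).left q)) := by
    intro i _
    have h7 := congrArg (fun t => ((1 : H) ⊗ₜ[k] S (r.left i)) * t) (DK7 hS (b i))
    simp only [Finset.mul_sum] at h7
    calc ∑ q ∈ (b i).index,
          ((S ((b i).left q)) ⊗ₜ[k] (S (r.left i))) * Δ (εt k H ((b i).right q))
        = ∑ q ∈ (b i).index, ((1 : H) ⊗ₜ[k] S (r.left i)) *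
            (((S ((b i).left q)) ⊗ₜ[k] (1 : H)) * Δ (εt k H ((b i).right q))) := by
          refine Finset.sum_congr rfl fun q _ => ?_
          rw [← mul_assoc, Algebra.TensorProduct.tmul_mul_tmul, one_mul, mul_one]
      _ = ∑ q ∈ (b i).index, ((1 : H) ⊗ₜ[k] S (r.left i)) *
            (S ((b i).right q) ⊗ₜ[k] εt k H ((b i).left q)) := h7
      _ = ∑ q ∈ (b i).index, S ((b i).right q) ⊗ₜ[k]
            (S (r.left i) * εt k H ((b i).left q)) := by
          refine Finset.sum_congr rfl fun q _ => ?_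
          rw [Algebra.TensorProduct.tmul_mul_tmul, one_mul]
  rw [Finset.sum_congr rfl step1]
  set Ω : H ⊗[k] (H ⊗[k] H) →ₗ[k] H ⊗[k] H :=
    TensorProduct.map S (LinearMap.mul' k H ∘ₗ TensorProduct.map S (εt k H))
      ∘ₗ (TensorProduct.comm k (H ⊗[k] H) H).toLinearMap
      ∘ₗ (TensorProduct.assoc k H H H).symm.toLinearMap with hΩ
  have hex := coassoc_exchange Ω r (fun i => ℛ k (r.left i)) b
  simp only [hΩ, coe_comp, Function.comp_apply, LinearEquiv.coe_coe, assoc_symm_tmul,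
    comm_tmul, map_tmul, mul'_apply] at hex
  rw [← hex]
  refine Finset.sum_congr rfl fun i _ => ?_
  rw [← S4_sum hS.1 hS.2.2 (ℛ k (r.left i)), tmul_sum]

/-- G3 : the antipode is a coalgebra antihomomorphism. -/
theorem comul_S (x : H) :
    Δ (S x) = (TensorProduct.comm k H H) (TensorProduct.map S S (Δ x)) := by
  obtain ⟨r⟩ : Nonempty (Coalgebra.Repr k x (H × H)) := ⟨ℛ k x⟩
  have hRHS : (TensorProduct.comm k H H) (TensorProduct.map S S (Δ x))
      = ∑ i ∈ r.index, S (r.right i) ⊗ₜ[k] S (r.left i) := by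
    rw [← r.eq]
    simp [map_sum]
  rw [hRHS]
  -- the ζ and F maps
  set ζ : H ⊗[k] (H ⊗[k] H) →ₗ[k] H ⊗[k] H :=
    TensorProduct.map (εs k H) (LinearMap.mul' k H)
      ∘ₗ (TensorProduct.comm k (H ⊗[k] H) H).toLinearMap
      ∘ₗ (TensorProduct.assoc k H H H).symm.toLinearMap
      ∘ₗ LinearMap.lTensor H (TensorProduct.comm k H H).toLinearMap with hζ
  set F : H ⊗[k] H →ₗ[k] H ⊗[k] H :=
    ζ ∘ₗ TensorProduct.map S Coalgebra.comul with hF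
  have hF_apply : ∀ (α w : H) (c : Coalgebra.Repr k w (H × H)),
      F (α ⊗ₜ[k] w) = ∑ t ∈ c.index, εs k H (c.left t) ⊗ₜ[k] (S α * c.right t) := by
    intro α w c
    rw [hF]
    simp only [coe_comp, Function.comp_apply, map_tmul]
    rw [← c.eq]
    simp only [hζ, tmul_sum, map_sum, coe_comp, Function.comp_apply, LinearEquiv.coe_coe,
      lTensor_tmul, comm_tmul, assoc_symm_tmul, map_tmul, mul'_apply]
  symm
  calc ∑ i ∈ r.index, S (r.right i) ⊗ₜ[k] S (r.left i)
      = ∑ i ∈ r.index, ∑ q ∈ (ℛ k (r.right i)).index,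
          ((S ((ℛ k (r.right i)).left q)) ⊗ₜ[k] (S (r.left i))) *
            Δ (εt k H ((ℛ k (r.right i)).right q)) :=
        (DK3 hS r (fun i => ℛ k (r.right i))).symm
    _ = ∑ i ∈ r.index, ∑ q ∈ (ℛ k (r.right i)).index,
          ∑ t ∈ (ℛ k ((ℛ k (r.right i)).right q)).index,
          ((S ((ℛ k (r.right i)).left q)) ⊗ₜ[k] (S (r.left i))) *
            (Δ ((ℛ k ((ℛ k (r.right i)).right q)).left t) *
              Δ (S ((ℛ k ((ℛ k (r.right i)).right q)).right t))) := by
        refine Finset.sum_congr rfl fun i _ => Finset.sum_congr rfl fun q _ => ?_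
        rw [← S1_sum hS.1 (ℛ k ((ℛ k (r.right i)).right q)), map_sum, Finset.mul_sum]
        refine Finset.sum_congr rfl fun t _ => ?_
        rw [WeakBialgebra.comul_mul (k := k)]
    _ = ∑ i ∈ r.index, ∑ q ∈ (ℛ k (r.right i)).index,
          ∑ t ∈ (ℛ k ((ℛ k (r.right i)).left q)).index,
          ((S ((ℛ k ((ℛ k (r.right i)).left q)).left t)) ⊗ₜ[k] (S (r.left i))) *
            (Δ ((ℛ k ((ℛ k (r.right i)).left q)).right t) *
              Δ (S ((ℛ k (r.right i)).right q))) := by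
        refine Finset.sum_congr rfl fun i _ => ?_
        set φi : H ⊗[k] (H ⊗[k] H) →ₗ[k] H ⊗[k] H :=
          LinearMap.mul' k (H ⊗[k] H) ∘ₗ TensorProduct.map
            ((TensorProduct.mk k H H).flip (S (r.left i)) ∘ₗ S)
            (LinearMap.mul' k (H ⊗[k] H) ∘ₗ
              TensorProduct.map Coalgebra.comul (Coalgebra.comul ∘ₗ S)) with hφi
        have hex := coassoc_exchange φi (ℛ k (r.right i))
          (fun q => ℛ k ((ℛ k (r.right i)).left q))
          (fun q => ℛ k ((ℛ k (r.right i)).right q))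
        simp only [hφi, coe_comp, Function.comp_apply, map_tmul, mul'_apply,
          TensorProduct.mk_apply, flip_apply] at hex
        exact hex.symm
    _ = ∑ i ∈ r.index, ∑ q ∈ (ℛ k (r.right i)).index,
          ∑ t ∈ (ℛ k ((ℛ k (r.right i)).left q)).index,
          ((εs k H ((ℛ k ((ℛ k (r.right i)).left q)).left t)) ⊗ₜ[k]
              (S (r.left i) * (ℛ k ((ℛ k (r.right i)).left q)).right t)) *
            Δ (S ((ℛ k (r.right i)).right q)) := by
        refine Finset.sum_congr rfl fun i _ => Finset.sum_congr rfl fun q _ => ?_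
        rw [Finset.sum_congr rfl fun t (_ : t ∈ (ℛ k ((ℛ k (r.right i)).left q)).index) =>
          (mul_assoc _ _ _).symm]
        rw [← Finset.sum_mul, DS2 hS (S (r.left i)) (ℛ k ((ℛ k (r.right i)).left q)),
          Finset.sum_mul]
    _ = ∑ i ∈ r.index, ∑ q ∈ (ℛ k (r.left i)).index,
          F ((ℛ k (r.left i)).left q ⊗ₜ[k] (ℛ k (r.left i)).right q) * Δ (S (r.right i)) := by
        set Θ : H ⊗[k] (H ⊗[k] H) →ₗ[k] H ⊗[k] H :=
          LinearMap.mul' k (H ⊗[k] H) ∘ₗ TensorProduct.map F (Coalgebra.comul ∘ₗ S)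
            ∘ₗ (TensorProduct.assoc k H H H).symm.toLinearMap with hΘ
        have hex := coassoc_exchange Θ r (fun i => ℛ k (r.left i)) (fun i => ℛ k (r.right i))
        simp only [hΘ, coe_comp, Function.comp_apply, LinearEquiv.coe_coe, assoc_symm_tmul,
          map_tmul, mul'_apply] at hex
        refine Eq.trans ?_ hex.symm
        refine Finset.sum_congr rfl fun i _ => Finset.sum_congr rfl fun q _ => ?_
        rw [hF_apply _ _ (ℛ k ((ℛ k (r.right i)).left q)), Finset.sum_mul]
    _ = ∑ i ∈ r.index, Δ (εs k H (r.left i)) * Δ (S (r.right i)) := by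
        refine Finset.sum_congr rfl fun i _ => ?_
        rw [← DK2 hS (ℛ k (r.left i)) (fun q => ℛ k ((ℛ k (r.left i)).right q)),
          Finset.sum_mul]
        refine Finset.sum_congr rfl fun q _ => ?_
        rw [hF_apply _ _ (ℛ k ((ℛ k (r.left i)).right q)), Finset.sum_mul]
    _ = Δ (S x) := by
        rw [← S5_sum hS.2.1 hS.2.2 r, map_sum]
        exact Finset.sum_congr rfl fun i _ => by rw [WeakBialgebra.comul_mul (k := k)]

end DualAntipode3

end Lemmas
end WeakBialgebraPaper

open WeakBialgebraPaper in
/-- The antipode of a weak Hopf algebra is an algebra antihomomorphism and a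
coalgebra antihomomorphism. -/
theorem antipode_antihom (k H : Type*) [Field k] [Ring H] [Algebra k H]
    [Coalgebra k H] [WeakBialgebra k H] (S : H →ₗ[k] H) (hS : IsAntipode k H S) :
    (∀ x y : H, S (x * y) = S y * S x) ∧
    (S 1 = 1) ∧
    (∀ x : H, Coalgebra.comul (R := k) (S x) =
      (TensorProduct.comm k H H) (TensorProduct.map S S (Coalgebra.comul (R := k) x))) ∧
    (∀ x : H, Coalgebra.counit (R := k) (S x) = Coalgebra.counit (R := k) x) := by
  exact ⟨fun x y => S_mul hS x y, S_one hS, fun x => comul_S hS x, fun x => counit_S hS x⟩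
end

section
/- Let C be a left-autonomous monoidal category, C' a monoidal category, and (F, F_{X,Y}, F_0, F^{X,Y}, F^0): C → C' a functor with Frobenius structure. Then for every object X of C, F(X) has a left-dual given by (F(X*), ev', coev') where ev' = F^0 ∘ F(ev_X) ∘ F_{X*,X} : F(X*) ⊗ F(X) → 1' and coev' = F^{X,X*} ∘ F(coev_X) ∘ F_0 : 1' → F(X) ⊗ F(X*). -/
open CategoryTheory MonoidalCategory Functor.LaxMonoidal Functor.OplaxMonoidal

namespace SphericalPaper

variable {C D : Type*} [Category C] [MonoidalCategory C] [Category D] [MonoidalCategory D]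

/-- A functor with Frobenius structure (Szlachányi): simultaneously lax monoidal via
`(μ, ε)` and oplax monoidal via `(δ, η)`, satisfying the two Frobenius compatibility
conditions. -/
class FrobeniusMonoidal (F : C ⥤ D) extends F.LaxMonoidal, F.OplaxMonoidal where
  frobenius₁ : ∀ X Y Z : C,
    μ (X ⊗ Y) Z ≫ F.map (α_ X Y Z).hom ≫ δ X (Y ⊗ Z) =
      δ X Y ▷ F.obj Z ≫ (α_ (F.obj X) (F.obj Y) (F.obj Z)).hom ≫ F.obj X ◁ μ Y Z
  frobenius₂ : ∀ X Y Z : C,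
    μ X (Y ⊗ Z) ≫ F.map (α_ X Y Z).inv ≫ δ (X ⊗ Y) Z =
      F.obj X ◁ δ Y Z ≫ (α_ (F.obj X) (F.obj Y) (F.obj Z)).inv ≫ μ X Y ▷ F.obj Z

/-- A Frobenius structure is separable if `F_{X,Y} ∘ F^{X,Y} = id`. -/
noncomputable def FrobeniusMonoidal.Separable (F : C ⥤ D) [FrobeniusMonoidal F] : Prop :=
  ∀ X Y : C, δ F X Y ≫ μ F X Y = 𝟙 (F.obj (X ⊗ Y))

end SphericalPaper

open SphericalPaper in
/-- A functor with Frobenius structure preserves left-duals: `F(X)` has the left-dual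
`(F(X*), F^0 ∘ F(ev_X) ∘ F_{X*,X}, F^{X,X*} ∘ F(coev_X) ∘ F_0)`. -/
theorem frobenius_functor_preserves_duals {C D : Type*} [Category C]
    [MonoidalCategory C] [RightRigidCategory C] [Category D] [MonoidalCategory D]
    (F : C ⥤ D) [FrobeniusMonoidal F] (X : C) :
    -- `ev' = F^0 ∘ F(ev_X) ∘ F_{X*,X}` and `coev' = F^{X,X*} ∘ F(coev_X) ∘ F_0`
    -- satisfy the two triangle identities
    ((λ_ (F.obj X)).inv ≫
        ((ε F ≫ F.map (η_ X (Xᘁ : C)) ≫ δ F X (Xᘁ : C)) ▷ F.obj X) ≫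
        (α_ (F.obj X) (F.obj (Xᘁ : C)) (F.obj X)).hom ≫
        (F.obj X ◁ (μ F (Xᘁ : C) X ≫ F.map (ε_ X (Xᘁ : C)) ≫ η F)) ≫
        (ρ_ (F.obj X)).hom = 𝟙 (F.obj X)) ∧
    ((ρ_ (F.obj (Xᘁ : C))).inv ≫
        (F.obj (Xᘁ : C) ◁ (ε F ≫ F.map (η_ X (Xᘁ : C)) ≫ δ F X (Xᘁ : C))) ≫
        (α_ (F.obj (Xᘁ : C)) (F.obj X) (F.obj (Xᘁ : C))).inv ≫
        ((μ F (Xᘁ : C) X ≫ F.map (ε_ X (Xᘁ : C)) ≫ η F) ▷ F.obj (Xᘁ : C)) ≫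
        (λ_ (F.obj (Xᘁ : C))).hom = 𝟙 (F.obj (Xᘁ : C))) := by
  constructor
  · simp only [MonoidalCategory.comp_whiskerRight, MonoidalCategory.whiskerLeft_comp,
      Category.assoc]
    slice_lhs 4 6 => rw [← FrobeniusMonoidal.frobenius₁]
    slice_lhs 3 4 => rw [Functor.LaxMonoidal.μ_natural_left]
    slice_lhs 1 3 => rw [Functor.LaxMonoidal.left_unitality_inv]
    slice_lhs 4 5 => rw [Functor.OplaxMonoidal.δ_natural_right]
    slice_lhs 5 7 => rw [Functor.OplaxMonoidal.right_unitality_hom]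
    simp only [← F.map_comp, Category.assoc]
    rw [ExactPairing.evaluation_coevaluation_assoc]
    simp
  · simp only [MonoidalCategory.comp_whiskerRight, MonoidalCategory.whiskerLeft_comp,
      Category.assoc]
    slice_lhs 4 6 => rw [← FrobeniusMonoidal.frobenius₂]
    slice_lhs 3 4 => rw [Functor.LaxMonoidal.μ_natural_right]
    slice_lhs 1 3 => rw [Functor.LaxMonoidal.right_unitality_inv]
    slice_lhs 4 5 => rw [Functor.OplaxMonoidal.δ_natural_left]
    slice_lhs 5 7 => rw [Functor.OplaxMonoidal.left_unitality_hom]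
    simp only [← F.map_comp, Category.assoc]
    rw [ExactPairing.coevaluation_evaluation_assoc]
    simp
end

section
/- Let C and C' be left-autonomous categories and F: C → C' a functor with Frobenius structure. Then there is a natural isomorphism u_X: F(X*) → (FX)* for each object X, explicitly constructed from the Frobenius structure and the duality data, and u satisfies ev_{FX} ∘ (u_X ⊗ id_{FX}) = F^0 ∘ F(ev_X) ∘ F_{X*,X} and (id_{FX} ⊗ u_X^{-1}) ∘ coev_{FX} = F^{X,X*} ∘ F(coev_X) ∘ F_0. -/
open CategoryTheory MonoidalCategory Functor.LaxMonoidal Functor.OplaxMonoidal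

namespace SphericalPaper

variable {C : Type*} [Category C] [MonoidalCategory C] [RightRigidCategory C]
variable {D : Type*} [Category D] [MonoidalCategory D] [RightRigidCategory D]

/-- The specified dual `X*` of an object. -/
noncomputable abbrev du (X : C) : C := (Xᘁ : C)

/-- The canonical comparison morphism `u_X : F(X*) ⟶ (FX)*`. -/
noncomputable def uComp (F : C ⥤ D) [F.LaxMonoidal] [F.OplaxMonoidal] (X : C) :
    F.obj (du X) ⟶ du (F.obj X) :=
  (ρ_ (F.obj (du X))).inv ≫ (F.obj (du X) ◁ η_ (F.obj X) (du (F.obj X))) ≫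
    (α_ _ _ _).inv ≫ ((μ F (du X) X ≫ F.map (ε_ X (du X)) ≫ η F) ▷ du (F.obj X)) ≫
    (λ_ (du (F.obj X))).hom

/-- The explicit inverse `u_X⁻¹ : (FX)* ⟶ F(X*)`. -/
noncomputable def uInvComp (F : C ⥤ D) [F.LaxMonoidal] [F.OplaxMonoidal] (X : C) :
    du (F.obj X) ⟶ F.obj (du X) :=
  (ρ_ (du (F.obj X))).inv ≫
    (du (F.obj X) ◁ (ε F ≫ F.map (η_ X (du X)) ≫ δ F X (du X))) ≫
    (α_ _ _ _).inv ≫ (ε_ (F.obj X) (du (F.obj X)) ▷ F.obj (du X)) ≫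
    (λ_ (F.obj (du X))).hom

end SphericalPaper


namespace SphericalPaper

section Helpers

variable {D : Type*} [Category D] [MonoidalCategory D]

lemma helper3 {W A A' : D} [ExactPairing A A'] (e : W ⊗ A ⟶ 𝟙_ D) :
    ((ρ_ W).inv ≫ W ◁ η_ A A' ≫ (α_ _ _ _).inv ≫ e ▷ A' ≫ (λ_ A').hom) ▷ A ≫ ε_ A A' = e := by
  calc _ = 𝟙 _ ⊗≫ W ◁ η_ A A' ▷ A ⊗≫ (e ▷ (A' ⊗ A) ≫ 𝟙_ D ◁ ε_ A A') ⊗≫ 𝟙 _ := by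
        monoidal
    _ = 𝟙 _ ⊗≫ W ◁ (η_ A A' ▷ A ⊗≫ A ◁ ε_ A A') ⊗≫ e ⊗≫ 𝟙 _ := by
        rw [← whisker_exchange]; monoidal
    _ = e := by rw [ExactPairing.evaluation_coevaluation'']; monoidal

lemma helper4 {W A A' : D} [ExactPairing A A'] (c : 𝟙_ D ⟶ A ⊗ W) :
    η_ A A' ≫ A ◁ ((ρ_ A').inv ≫ A' ◁ c ≫ (α_ _ _ _).inv ≫ ε_ A A' ▷ W ≫ (λ_ W).hom) = c := by
  calc _ = 𝟙 _ ⊗≫ (η_ A A' ▷ 𝟙_ D ≫ (A ⊗ A') ◁ c) ⊗≫ (A ◁ ε_ A A') ▷ W ⊗≫ 𝟙 _ := by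
        monoidal
    _ = 𝟙 _ ⊗≫ c ⊗≫ (η_ A A' ▷ A ⊗≫ A ◁ ε_ A A') ▷ W ⊗≫ 𝟙 _ := by
        rw [← whisker_exchange]; monoidal
    _ = c := by rw [ExactPairing.evaluation_coevaluation'']; monoidal

end Helpers

section Pairing

variable {C : Type*} [Category C] [MonoidalCategory C] [RightRigidCategory C]
variable {D : Type*} [Category D] [MonoidalCategory D] [RightRigidCategory D]
variable (F : C ⥤ D) [FrobeniusMonoidal F]

set_option linter.unusedSectionVars false

/-- The Frobenius pairing on `(F X, F (Xᘁ))`. -/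
@[reducible]
noncomputable def frobPairing (X : C) : ExactPairing (F.obj X) (F.obj (Xᘁ)) where
  coevaluation' := ε F ≫ F.map (η_ X (Xᘁ)) ≫ δ F X (Xᘁ)
  evaluation' := μ F (Xᘁ) X ≫ F.map (ε_ X (Xᘁ)) ≫ η F
  coevaluation_evaluation' := by
    calc F.obj (Xᘁ) ◁ (ε F ≫ F.map (η_ X (Xᘁ)) ≫ δ F X (Xᘁ)) ≫ (α_ _ _ _).inv ≫
          (μ F (Xᘁ) X ≫ F.map (ε_ X (Xᘁ)) ≫ η F) ▷ F.obj (Xᘁ)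
        = F.obj (Xᘁ) ◁ ε F ≫ F.obj (Xᘁ) ◁ F.map (η_ X (Xᘁ)) ≫
            (F.obj (Xᘁ) ◁ δ F X (Xᘁ) ≫ (α_ _ _ _).inv ≫ μ F (Xᘁ) X ▷ F.obj (Xᘁ)) ≫
            F.map (ε_ X (Xᘁ)) ▷ F.obj (Xᘁ) ≫ η F ▷ F.obj (Xᘁ) := by
          simp only [MonoidalCategory.whiskerLeft_comp, comp_whiskerRight, Category.assoc]
      _ = F.obj (Xᘁ) ◁ ε F ≫ F.obj (Xᘁ) ◁ F.map (η_ X (Xᘁ)) ≫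
            (μ F (Xᘁ) ((X ⊗ (Xᘁ))) ≫ F.map (α_ (Xᘁ) X (Xᘁ)).inv ≫ δ F ((Xᘁ) ⊗ X) (Xᘁ)) ≫
            F.map (ε_ X (Xᘁ)) ▷ F.obj (Xᘁ) ≫ η F ▷ F.obj (Xᘁ) := by
          rw [← FrobeniusMonoidal.frobenius₂]
      _ = F.obj (Xᘁ) ◁ ε F ≫ μ F (Xᘁ) (𝟙_ C) ≫
            F.map ((Xᘁ) ◁ η_ X (Xᘁ) ≫ (α_ (Xᘁ) X (Xᘁ)).inv ≫ ε_ X (Xᘁ) ▷ (Xᘁ)) ≫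
            δ F (𝟙_ C) (Xᘁ) ≫ η F ▷ F.obj (Xᘁ) := by
          simp only [Category.assoc, μ_natural_right_assoc, Functor.map_comp]
          simp
      _ = (F.obj (Xᘁ) ◁ ε F ≫ μ F (Xᘁ) (𝟙_ C) ≫ F.map (ρ_ (Xᘁ)).hom) ≫
            (F.map (λ_ (Xᘁ)).inv ≫ δ F (𝟙_ C) (Xᘁ) ≫ η F ▷ F.obj (Xᘁ)) := by
          rw [ExactPairing.coevaluation_evaluation]
          simp
      _ = (ρ_ _).hom ≫ (λ_ _).inv := by
          rw [← Functor.LaxMonoidal.right_unitality, ← Functor.OplaxMonoidal.left_unitality]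
  evaluation_coevaluation' := by
    calc (ε F ≫ F.map (η_ X (Xᘁ)) ≫ δ F X (Xᘁ)) ▷ F.obj X ≫ (α_ _ _ _).hom ≫
          F.obj X ◁ (μ F (Xᘁ) X ≫ F.map (ε_ X (Xᘁ)) ≫ η F)
        = ε F ▷ F.obj X ≫ F.map (η_ X (Xᘁ)) ▷ F.obj X ≫
            (δ F X (Xᘁ) ▷ F.obj X ≫ (α_ _ _ _).hom ≫ F.obj X ◁ μ F (Xᘁ) X) ≫
            F.obj X ◁ F.map (ε_ X (Xᘁ)) ≫ F.obj X ◁ η F := by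
          simp only [MonoidalCategory.whiskerLeft_comp, comp_whiskerRight, Category.assoc]
      _ = ε F ▷ F.obj X ≫ F.map (η_ X (Xᘁ)) ▷ F.obj X ≫
            (μ F (X ⊗ (Xᘁ)) X ≫ F.map (α_ X (Xᘁ) X).hom ≫ δ F X ((Xᘁ) ⊗ X)) ≫
            F.obj X ◁ F.map (ε_ X (Xᘁ)) ≫ F.obj X ◁ η F := by
          rw [← FrobeniusMonoidal.frobenius₁]
      _ = ε F ▷ F.obj X ≫ μ F (𝟙_ C) X ≫
            F.map (η_ X (Xᘁ) ▷ X ≫ (α_ X (Xᘁ) X).hom ≫ X ◁ ε_ X (Xᘁ)) ≫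
            δ F X (𝟙_ C) ≫ F.obj X ◁ η F := by
          simp only [Category.assoc, μ_natural_left_assoc, Functor.map_comp]
          simp
      _ = (ε F ▷ F.obj X ≫ μ F (𝟙_ C) X ≫ F.map (λ_ X).hom) ≫
            (F.map (ρ_ X).inv ≫ δ F X (𝟙_ C) ≫ F.obj X ◁ η F) := by
          rw [ExactPairing.evaluation_coevaluation]
          simp
      _ = (λ_ _).hom ≫ (ρ_ _).inv := by
          rw [← Functor.LaxMonoidal.left_unitality, ← Functor.OplaxMonoidal.right_unitality]

/-- `F.obj (Xᘁ)` as a right dual of `F.obj X` via the Frobenius pairing. -/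
@[reducible]
noncomputable def frobDual (X : C) : HasRightDual (F.obj X) :=
  @HasRightDual.mk _ _ _ (F.obj X) (F.obj (Xᘁ)) (frobPairing F X)

/-- A Frobenius monoidal functor sends right adjoint mates to right adjoint mates with
respect to the Frobenius pairings. -/
lemma map_mate {X Y : C} (f : X ⟶ Y) :
    F.map (fᘁ) =
      @rightAdjointMate D _ _ (F.obj X) (F.obj Y) (frobDual F X) (frobDual F Y) (F.map f) := by
  have h0 : @rightAdjointMate D _ _ (F.obj X) (F.obj Y) (frobDual F X) (frobDual F Y) (F.map f)
      = (ρ_ (F.obj (Yᘁ))).inv ≫ F.obj (Yᘁ) ◁ (ε F ≫ F.map (η_ X (Xᘁ)) ≫ δ F X (Xᘁ)) ≫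
        F.obj (Yᘁ) ◁ (F.map f ▷ F.obj (Xᘁ)) ≫ (α_ _ _ _).inv ≫
        (μ F (Yᘁ) Y ≫ F.map (ε_ Y (Yᘁ)) ≫ η F) ▷ F.obj (Xᘁ) ≫ (λ_ _).hom := rfl
  rw [h0]; symm
  calc (ρ_ (F.obj (Yᘁ))).inv ≫ F.obj (Yᘁ) ◁ (ε F ≫ F.map (η_ X (Xᘁ)) ≫ δ F X (Xᘁ)) ≫
        F.obj (Yᘁ) ◁ (F.map f ▷ F.obj (Xᘁ)) ≫ (α_ _ _ _).inv ≫
        (μ F (Yᘁ) Y ≫ F.map (ε_ Y (Yᘁ)) ≫ η F) ▷ F.obj (Xᘁ) ≫ (λ_ _).hom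
      = (ρ_ (F.obj (Yᘁ))).inv ≫ F.obj (Yᘁ) ◁ ε F ≫
          F.obj (Yᘁ) ◁ (F.map (η_ X (Xᘁ)) ≫ F.map (f ▷ (Xᘁ))) ≫
          (F.obj (Yᘁ) ◁ δ F Y (Xᘁ) ≫ (α_ _ _ _).inv ≫ μ F (Yᘁ) Y ▷ F.obj (Xᘁ)) ≫
          F.map (ε_ Y (Yᘁ)) ▷ F.obj (Xᘁ) ≫ η F ▷ F.obj (Xᘁ) ≫ (λ_ (F.obj (Xᘁ))).hom := by
        simp only [MonoidalCategory.whiskerLeft_comp, comp_whiskerRight, Category.assoc]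
        slice_lhs 4 5 => rw [← MonoidalCategory.whiskerLeft_comp, δ_natural_left,
          MonoidalCategory.whiskerLeft_comp]
        simp only [Category.assoc]
    _ = (ρ_ (F.obj (Yᘁ))).inv ≫ F.obj (Yᘁ) ◁ ε F ≫
          F.obj (Yᘁ) ◁ (F.map (η_ X (Xᘁ)) ≫ F.map (f ▷ (Xᘁ))) ≫
          (μ F (Yᘁ) (Y ⊗ (Xᘁ)) ≫ F.map (α_ (Yᘁ) Y (Xᘁ)).inv ≫ δ F ((Yᘁ) ⊗ Y) (Xᘁ)) ≫
          F.map (ε_ Y (Yᘁ)) ▷ F.obj (Xᘁ) ≫ η F ▷ F.obj (Xᘁ) ≫ (λ_ (F.obj (Xᘁ))).hom := by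
        rw [← FrobeniusMonoidal.frobenius₂]
    _ = F.map (fᘁ) := by
        simp only [MonoidalCategory.whiskerLeft_comp, Category.assoc, μ_natural_right_assoc,
          δ_natural_left_assoc, Functor.map_comp]
        rw [Functor.LaxMonoidal.right_unitality_inv_assoc,
          Functor.OplaxMonoidal.left_unitality_hom]
        simp only [rightAdjointMate, Functor.map_comp, Category.assoc]

lemma uComp_eq (X : C) :
    uComp F X =
      @rightAdjointMate D _ _ (F.obj X) (F.obj X) inferInstance (frobDual F X)
        (𝟙 (F.obj X)) := by
  have h0 : @rightAdjointMate D _ _ (F.obj X) (F.obj X) inferInstance (frobDual F X)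
        (𝟙 (F.obj X))
      = (ρ_ (F.obj (Xᘁ))).inv ≫ F.obj (Xᘁ) ◁ η_ (F.obj X) ((F.obj X)ᘁ) ≫
        F.obj (Xᘁ) ◁ (𝟙 (F.obj X) ▷ (F.obj X)ᘁ) ≫ (α_ _ _ _).inv ≫
        (μ F (Xᘁ) X ≫ F.map (ε_ X (Xᘁ)) ≫ η F) ▷ (F.obj X)ᘁ ≫ (λ_ _).hom := rfl
  rw [h0]
  simp [uComp]

lemma uInvComp_eq (X : C) :
    uInvComp F X =
      @rightAdjointMate D _ _ (F.obj X) (F.obj X) (frobDual F X) inferInstance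
        (𝟙 (F.obj X)) := by
  have h0 : @rightAdjointMate D _ _ (F.obj X) (F.obj X) (frobDual F X) inferInstance
        (𝟙 (F.obj X))
      = (ρ_ ((F.obj X)ᘁ)).inv ≫ (F.obj X)ᘁ ◁ (ε F ≫ F.map (η_ X (Xᘁ)) ≫ δ F X (Xᘁ)) ≫
        (F.obj X)ᘁ ◁ (𝟙 (F.obj X) ▷ F.obj (Xᘁ)) ≫ (α_ _ _ _).inv ≫
        ε_ (F.obj X) ((F.obj X)ᘁ) ▷ F.obj (Xᘁ) ≫ (λ_ _).hom := rfl
  rw [h0]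
  simp [uInvComp]

end Pairing

end SphericalPaper

open SphericalPaper in
/-- For a functor with Frobenius structure between rigid categories, the canonical
comparison morphisms `u_X : F(X*) ⟶ (FX)*` are natural isomorphisms satisfying
`ev_{FX} ∘ (u_X ⊗ id) = F^0 ∘ F(ev_X) ∘ F_{X*,X}` and
`(id ⊗ u_X⁻¹) ∘ coev_{FX} = F^{X,X*} ∘ F(coev_X) ∘ F_0`. -/
theorem frobenius_functor_dual_comparison {C D : Type*} [Category C]
    [MonoidalCategory C] [RightRigidCategory C] [Category D] [MonoidalCategory D]
    [RightRigidCategory D] (F : C ⥤ D) [FrobeniusMonoidal F] :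
    -- `u_X` is an isomorphism with inverse `u_X⁻¹`
    (∀ X : C, uComp F X ≫ uInvComp F X = 𝟙 (F.obj (du X)) ∧
      uInvComp F X ≫ uComp F X = 𝟙 (du (F.obj X))) ∧
    -- `u` is natural
    (∀ {X Y : C} (f : X ⟶ Y),
      F.map (rightAdjointMate f) ≫ uComp F X = uComp F Y ≫ rightAdjointMate (F.map f)) ∧
    -- compatibility with evaluations
    (∀ X : C, (uComp F X ▷ F.obj X) ≫ ε_ (F.obj X) (du (F.obj X)) =
      μ F (du X) X ≫ F.map (ε_ X (du X)) ≫ η F) ∧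
    -- compatibility with coevaluations
    (∀ X : C, η_ (F.obj X) (du (F.obj X)) ≫ (F.obj X ◁ uInvComp F X) =
      ε F ≫ F.map (η_ X (du X)) ≫ δ F X (du X)) := by
  refine ⟨fun X => ⟨?_, ?_⟩, fun {X Y} f => ?_, fun X => ?_, fun X => ?_⟩
  · rw [uComp_eq, uInvComp_eq,
      ← @comp_rightAdjointMate D _ _ (F.obj X) (F.obj X) (F.obj X) (frobDual F X) inferInstance
        (frobDual F X) (𝟙 _) (𝟙 _), Category.comp_id]
    exact @rightAdjointMate_id D _ _ (F.obj X) (frobDual F X)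
  · rw [uComp_eq, uInvComp_eq,
      ← @comp_rightAdjointMate D _ _ (F.obj X) (F.obj X) (F.obj X) inferInstance (frobDual F X)
        inferInstance (𝟙 _) (𝟙 _), Category.comp_id]
    exact @rightAdjointMate_id D _ _ (F.obj X) inferInstance
  · rw [map_mate, uComp_eq F X, uComp_eq F Y,
      ← @comp_rightAdjointMate D _ _ (F.obj X) (F.obj X) (F.obj Y) inferInstance (frobDual F X)
        (frobDual F Y) (𝟙 _) (F.map f),
      ← @comp_rightAdjointMate D _ _ (F.obj X) (F.obj Y) (F.obj Y) inferInstance inferInstance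
        (frobDual F Y) (F.map f) (𝟙 _),
      Category.id_comp, Category.comp_id]
  · simp only [uComp]
    exact helper3 _
  · simp only [uInvComp]
    exact helper4 _
end
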